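/- arXiv:2302.02954 — 6 statements merged into one kernel-verified Lean document; each statement's English description precedes it below -/
import Mathlib

section
/- For every integer m ≥ 2 and θ ∈ (−1,1), the integral χ_m^{+−}(θ) := ∬_{x≥0, y≤0} k_θ(x,y)^m · p_θ(1,x,y) · μ_θ(x) dx dy equals (−1)^m (2π)^{−1/2} (1+θ)/(1−θ)^{m−1}, and χ_m^{−+}(θ) := ∬_{x≤0, y≥0} k_θ(x,y)^m · p_θ(1,x,y) · μ_θ(x) dx dy equals (2π)^{−1/2} (1−θ)/(1+θ)^{m−1}. -/
/-
On each of the two mixed quadrants `k θ` and `μinv θ` are constant and `p θ` is a constant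
multiple of the heat kernel `exp (-(x - y) ^ 2 / 2)`, up to the null set of the axes. So each
integral is an explicit constant times
`∬_{x ≥ 0 ≥ y} exp (-(x - y) ^ 2 / 2) = ∬_{x, y > 0} exp (-(x + y) ^ 2 / 2)`,
and Fubini on the region `0 < x < s` turns the latter into `∫_0^∞ s exp (-s ^ 2 / 2) ds = 1`.
-/

open Real MeasureTheory Set

/-- `k θ x y = sgn(y) / (sgn(y)·θ + exp(2(xy)⁺))`. -/
noncomputable def k (θ x y : ℝ) : ℝ :=
  Real.sign y / (Real.sign y * θ + Real.exp (2 * max 0 (x * y)))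

/-- Transition density at time 1 of the skew Brownian motion of parameter `θ`. -/
noncomputable def p (θ x y : ℝ) : ℝ :=
  (Real.sqrt (2 * Real.pi))⁻¹ *
    (if 0 ≤ x ∧ 0 ≤ y then Real.exp (-(x - y) ^ 2 / 2) + θ * Real.exp (-(x + y) ^ 2 / 2)
     else if x ≤ 0 ∧ y ≤ 0 then Real.exp (-(x - y) ^ 2 / 2) - θ * Real.exp (-(x + y) ^ 2 / 2)
     else if 0 ≤ x then (1 - θ) * Real.exp (-(x - y) ^ 2 / 2)
     else (1 + θ) * Real.exp (-(x - y) ^ 2 / 2))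

/-- Invariant density of the skew Brownian motion of parameter `θ`. -/
noncomputable def μinv (θ x : ℝ) : ℝ := if 0 ≤ x then 1 + θ else 1 - θ

section

variable {E : Type*} [NormedAddCommGroup E] [NormedSpace ℝ E]

theorem integral_Ioi_comp_add_left (f : ℝ → E) (c : ℝ) :
    ∫ y in Ioi 0, f (c + y) = ∫ s in Ioi c, f s := by
  rw [← integral_indicator measurableSet_Ioi, ← integral_indicator measurableSet_Ioi,
    ← integral_add_left_eq_self ((Ioi c).indicator f) c]
  congr 1 with y
  simp only [indicator, mem_Ioi, lt_add_iff_pos_right]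

theorem integral_Ioi_indicator_Iio [CompleteSpace E] {s : ℝ} (hs : 0 ≤ s) (c : E) :
    ∫ x in Ioi 0, (Iio s).indicator (fun _ => c) x = s • c := by
  rw [integral_indicator measurableSet_Iio, Measure.restrict_restrict measurableSet_Iio,
    setIntegral_const, Iio_inter_Ioi, volume_real_Ioo_of_le hs, sub_zero]

theorem integral_Ioi_integral_Ioi_eq_integral_smul [CompleteSpace E] {f : ℝ → E}
    (hf_meas : AEStronglyMeasurable f (volume.restrict (Ioi 0)))
    (hf_int : IntegrableOn (fun s => s • f s) (Ioi 0)) :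
    ∫ x in Ioi 0, ∫ s in Ioi x, f s = ∫ s in Ioi 0, s • f s := by
  set F : ℝ → ℝ → E := fun x s => (Iio s).indicator (fun _ => f s) x
  have hF_meas : AEStronglyMeasurable (Function.uncurry F)
      ((volume.restrict (Ioi 0)).prod (volume.restrict (Ioi 0))) :=
    hf_meas.comp_snd.indicator (measurableSet_lt measurable_fst measurable_snd)
  have hF_int : Integrable (Function.uncurry F)
      ((volume.restrict (Ioi 0)).prod (volume.restrict (Ioi 0))) := by
    refine (integrable_prod_iff' hF_meas).2 ⟨?_, ?_⟩
    · filter_upwards [ae_restrict_mem measurableSet_Ioi] with s hs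
      refine (integrable_indicator_iff measurableSet_Iio).2 (integrableOn_const (C := f s) ?_)
      rw [Measure.restrict_apply measurableSet_Iio, Iio_inter_Ioi]
      exact measure_Ioo_lt_top.ne
    · refine hf_int.norm.congr ?_
      filter_upwards [ae_restrict_mem measurableSet_Ioi] with s hs
      simp only [F, Function.uncurry_apply_pair, norm_indicator_eq_indicator_norm,
        integral_Ioi_indicator_Iio hs.le, norm_smul, norm_of_nonneg hs.le, smul_eq_mul]
  calc ∫ x in Ioi 0, ∫ s in Ioi x, f s = ∫ x in Ioi 0, ∫ s in Ioi 0, F x s := by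
        refine setIntegral_congr_fun measurableSet_Ioi fun x hx => ?_
        have hF : ∀ s, F x s = (Ioi x).indicator f s := fun s => by
          simp only [F, indicator, mem_Iio, mem_Ioi]
        simp only [hF]
        rw [setIntegral_indicator measurableSet_Ioi, Ioi_inter_Ioi, sup_eq_right.2 hx.le]
    _ = ∫ s in Ioi 0, ∫ x in Ioi 0, F x s := integral_integral_swap hF_int
    _ = ∫ s in Ioi 0, s • f s :=
        setIntegral_congr_fun measurableSet_Ioi fun s hs => integral_Ioi_indicator_Iio hs.le _

end

theorem integral_Ioi_mul_exp_neg_sq_div_two : ∫ s in Ioi 0, s * exp (-s ^ 2 / 2) = 1 := by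
  have h := integral_mul_cexp_neg_mul_sq (b := 1 / 2) (by norm_num)
  rw [show (2 * (1 / 2 : ℂ))⁻¹ = 1 by norm_num] at h
  apply Complex.ofReal_injective
  rw [← integral_complex_ofReal, Complex.ofReal_one, ← h]
  push_cast
  congr 1 with s
  ring_nf

theorem integral_Ioi_integral_Ioi_exp_neg_add_sq :
    ∫ x in Ioi 0, ∫ y in Ioi 0, exp (-(x + y) ^ 2 / 2) = 1 := by
  have h_int : IntegrableOn (fun s : ℝ => s • exp (-s ^ 2 / 2)) (Ioi 0) := by
    refine (integrable_mul_exp_neg_mul_sq (b := 1 / 2) (by norm_num)).integrableOn.congr_fun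
      (fun s _ => ?_) measurableSet_Ioi
    rw [smul_eq_mul]; ring_nf
  simp_rw [integral_Ioi_comp_add_left (fun s => exp (-s ^ 2 / 2))]
  rw [integral_Ioi_integral_Ioi_eq_integral_smul (by fun_prop) h_int]
  exact integral_Ioi_mul_exp_neg_sq_div_two

theorem integral_Ici_integral_Iic_exp_neg_sub_sq :
    ∫ x in Ici 0, ∫ y in Iic 0, exp (-(x - y) ^ 2 / 2) = 1 := by
  have h_inner (x : ℝ) :
      ∫ y in Iic 0, exp (-(x - y) ^ 2 / 2) = ∫ y in Ioi 0, exp (-(x + y) ^ 2 / 2) := by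
    simpa [sub_neg_eq_add] using (integral_comp_neg_Ioi 0 fun y => exp (-(x - y) ^ 2 / 2)).symm
  simp_rw [h_inner, integral_Ici_eq_integral_Ioi]
  exact integral_Ioi_integral_Ioi_exp_neg_add_sq

theorem integral_Iic_integral_Ici_exp_neg_sub_sq :
    ∫ x in Iic 0, ∫ y in Ici 0, exp (-(x - y) ^ 2 / 2) = 1 := by
  have h := integral_comp_neg_Ioi 0 fun x => ∫ y in Ici 0, exp (-(x - y) ^ 2 / 2)
  rw [neg_zero] at h
  rw [← h]
  simp_rw [integral_Ici_eq_integral_Ioi, ← neg_add', neg_sq]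
  exact integral_Ioi_integral_Ioi_exp_neg_add_sq

theorem k_of_nonneg_of_neg {θ x y : ℝ} (hx : 0 ≤ x) (hy : y < 0) : k θ x y = -(1 - θ)⁻¹ := by
  rw [k, Real.sign_of_neg hy, max_eq_left (mul_nonpos_of_nonneg_of_nonpos hx hy.le), mul_zero,
    exp_zero, neg_one_mul, neg_add_eq_sub, neg_div, one_div]

theorem k_of_nonpos_of_pos {θ x y : ℝ} (hx : x ≤ 0) (hy : 0 < y) : k θ x y = (1 + θ)⁻¹ := by
  rw [k, Real.sign_of_pos hy, max_eq_left (mul_nonpos_of_nonpos_of_nonneg hx hy.le), mul_zero,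
    exp_zero, one_mul, add_comm, one_div]

theorem p_of_nonneg_of_neg {θ x y : ℝ} (hx : 0 ≤ x) (hy : y < 0) :
    p θ x y = (√(2 * π))⁻¹ * ((1 - θ) * exp (-(x - y) ^ 2 / 2)) := by
  rcases hx.eq_or_lt with rfl | hx
  · rw [p, if_neg (fun h => hy.not_ge h.2), if_pos ⟨le_rfl, hy.le⟩]
    ring_nf
  · rw [p, if_neg (fun h => hy.not_ge h.2), if_neg (fun h => hx.not_ge h.1), if_pos hx.le]

theorem p_of_neg_of_pos {θ x y : ℝ} (hx : x < 0) (hy : 0 < y) :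
    p θ x y = (√(2 * π))⁻¹ * ((1 + θ) * exp (-(x - y) ^ 2 / 2)) := by
  rw [p, if_neg (fun h => hx.not_ge h.1), if_neg (fun h => hy.not_ge h.2), if_neg hx.not_ge]

theorem μinv_of_nonneg {θ x : ℝ} (hx : 0 ≤ x) : μinv θ x = 1 + θ := if_pos hx

theorem μinv_of_neg {θ x : ℝ} (hx : x < 0) : μinv θ x = 1 - θ := if_neg hx.not_ge

theorem k_pow_mul_p_mul_μinv_of_nonneg_of_neg {m : ℕ} (hm : m ≠ 0) {θ x y : ℝ} (hθ : θ < 1)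
    (hx : 0 ≤ x) (hy : y < 0) :
    k θ x y ^ m * p θ x y * μinv θ x =
      (-1) ^ m * (√(2 * π))⁻¹ * (1 + θ) / (1 - θ) ^ (m - 1) * exp (-(x - y) ^ 2 / 2) := by
  obtain ⟨n, rfl⟩ := Nat.exists_eq_add_one_of_ne_zero hm
  have : 1 - θ ≠ 0 := sub_ne_zero.2 hθ.ne'
  rw [k_of_nonneg_of_neg hx hy, p_of_nonneg_of_neg hx hy, μinv_of_nonneg hx, Nat.add_sub_cancel,
    neg_pow, inv_pow, pow_succ]
  field_simp
  ring

theorem k_pow_mul_p_mul_μinv_of_neg_of_pos {m : ℕ} (hm : m ≠ 0) {θ x y : ℝ} (hθ : -1 < θ)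
    (hx : x < 0) (hy : 0 < y) :
    k θ x y ^ m * p θ x y * μinv θ x =
      (√(2 * π))⁻¹ * (1 - θ) / (1 + θ) ^ (m - 1) * exp (-(x - y) ^ 2 / 2) := by
  obtain ⟨n, rfl⟩ := Nat.exists_eq_add_one_of_ne_zero hm
  have : 1 + θ ≠ 0 := by linarith
  rw [k_of_nonpos_of_pos hx.le hy, p_of_neg_of_pos hx hy, μinv_of_neg hx, Nat.add_sub_cancel,
    inv_pow, pow_succ]
  field_simp

theorem chi_pm_mp (m : ℕ) (hm : 2 ≤ m) (θ : ℝ) (hθ : θ ∈ Set.Ioo (-1 : ℝ) 1) :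
    (∫ x in Ici (0 : ℝ), ∫ y in Iic (0 : ℝ), (k θ x y) ^ m * p θ x y * μinv θ x)
      = (-1) ^ m * (Real.sqrt (2 * Real.pi))⁻¹ * (1 + θ) / (1 - θ) ^ (m - 1) ∧
    (∫ x in Iic (0 : ℝ), ∫ y in Ici (0 : ℝ), (k θ x y) ^ m * p θ x y * μinv θ x)
      = (Real.sqrt (2 * Real.pi))⁻¹ * (1 - θ) / (1 + θ) ^ (m - 1) := by
  have hm₀ : m ≠ 0 := by omega
  constructor
  · calc _ = ∫ x in Ici 0, ∫ y in Iio 0,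
          (-1) ^ m * (√(2 * π))⁻¹ * (1 + θ) / (1 - θ) ^ (m - 1) * exp (-(x - y) ^ 2 / 2) := by
          refine setIntegral_congr_fun measurableSet_Ici fun x hx => ?_
          rw [integral_Iic_eq_integral_Iio]
          exact setIntegral_congr_fun measurableSet_Iio fun y hy =>
            k_pow_mul_p_mul_μinv_of_nonneg_of_neg hm₀ hθ.2 hx hy
      _ = _ := by
          simp_rw [integral_const_mul, ← integral_Iic_eq_integral_Iio,
            integral_Ici_integral_Iic_exp_neg_sub_sq, mul_one]
  · calc _ = ∫ x in Iio 0, ∫ y in Ioi 0,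
          (√(2 * π))⁻¹ * (1 - θ) / (1 + θ) ^ (m - 1) * exp (-(x - y) ^ 2 / 2) := by
          rw [integral_Iic_eq_integral_Iio]
          refine setIntegral_congr_fun measurableSet_Iio fun x hx => ?_
          rw [integral_Ici_eq_integral_Ioi]
          exact setIntegral_congr_fun measurableSet_Ioi fun y hy =>
            k_pow_mul_p_mul_μinv_of_neg_of_pos hm₀ hθ.1 hx hy
      _ = _ := by
          simp_rw [integral_const_mul, ← integral_Ici_eq_integral_Ioi,
            ← integral_Iic_eq_integral_Iio, integral_Iic_integral_Ici_exp_neg_sub_sq, mul_one]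
end

section
/- For every integer n ≥ 2, the double integral α_n := ∫_0^∞ ∫_0^∞ exp(−(x²+y²)/2 − n·x·y) dx dy equals (n² − 1)^{−1/2}·log(n + √(n² − 1)), and this value lies in the open interval (0, 1). -/
/-!
Substituting `y = x t` in the inner integral and then integrating in `x` first turns `α_n` into
`∫₀^∞ dt / (1 + t² + 2 n t)`. Since `1 + t² + 2 n t = (t + e^{-a}) (t + e^a)` with `a = arcosh n`,
partial fractions give `a / sinh a`, which lies in `(0, 1)` because `a < sinh a` for `a > 0`.
-/

open Real MeasureTheory Set Filter Topology

lemma integral_Ioi_mul_exp_neg_mul_sq {b : ℝ} (hb : 0 < b) :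
    ∫ x in Ioi (0 : ℝ), x * exp (-b * x ^ 2) = (2 * b)⁻¹ := by
  have hderiv : ∀ x ∈ Ici (0 : ℝ),
      HasDerivAt (fun x ↦ -(2 * b)⁻¹ * exp (-b * x ^ 2)) (x * exp (-b * x ^ 2)) x := by
    intro x _
    refine (((hasDerivAt_pow 2 x).const_mul (-b)).exp.const_mul (-(2 * b)⁻¹)).congr_deriv ?_
    field_simp
    ring
  have hlim : Tendsto (fun x : ℝ ↦ -(2 * b)⁻¹ * exp (-b * x ^ 2)) atTop (𝓝 (-(2 * b)⁻¹ * 0)) :=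
    (tendsto_exp_atBot.comp <| (tendsto_pow_atTop two_ne_zero).const_mul_atTop_of_neg
      (neg_lt_zero.mpr hb)).const_mul _
  rw [integral_Ioi_of_hasDerivAt_of_nonneg' hderiv (fun x (hx : 0 < x) ↦ by positivity) hlim]
  simp

lemma integral_Ioi_exp_eq_integral_Ioi_mul_exp (c : ℝ) {x : ℝ} (hx : 0 < x) :
    ∫ y in Ioi (0 : ℝ), exp (-(x ^ 2 + y ^ 2) / 2 - c * x * y)
      = ∫ t in Ioi (0 : ℝ), x * exp (-((1 + t ^ 2 + 2 * c * t) / 2) * x ^ 2) := by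
  rw [← mul_inv_cancel_left₀ hx.ne' (∫ y in Ioi (0 : ℝ), _), ← smul_eq_mul x⁻¹,
    ← mul_zero x, ← integral_comp_mul_left_Ioi _ _ hx, ← integral_const_mul, mul_zero]
  refine setIntegral_congr_fun measurableSet_Ioi fun t _ ↦ ?_
  ring_nf

lemma integral_Ioi_mul_exp_quadratic {c t : ℝ} (hc : 0 ≤ c) (ht : 0 < t) :
    ∫ x in Ioi (0 : ℝ), x * exp (-((1 + t ^ 2 + 2 * c * t) / 2) * x ^ 2)
      = (1 + t ^ 2 + 2 * c * t)⁻¹ := by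
  rw [integral_Ioi_mul_exp_neg_mul_sq (by positivity), mul_div_cancel₀ _ two_ne_zero]

lemma integrableOn_inv_one_add_sq_add_mul {c : ℝ} (hc : 0 ≤ c) :
    IntegrableOn (fun t : ℝ ↦ (1 + t ^ 2 + 2 * c * t)⁻¹) (Ioi 0) := by
  refine integrable_inv_one_add_sq.integrableOn.mono' (by fun_prop) ?_
  filter_upwards [ae_restrict_mem measurableSet_Ioi] with t (ht : 0 < t)
  rw [norm_inv, Real.norm_of_nonneg (by positivity)]
  exact inv_anti₀ (by positivity) (by nlinarith [mul_nonneg hc ht.le])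

lemma integrable_mul_exp_quadratic_prod {c : ℝ} (hc : 0 ≤ c) :
    Integrable (fun p : ℝ × ℝ ↦ p.1 * exp (-((1 + p.2 ^ 2 + 2 * c * p.2) / 2) * p.1 ^ 2))
      ((volume.restrict (Ioi 0)).prod (volume.restrict (Ioi 0))) := by
  refine (integrable_prod_iff' (Continuous.aestronglyMeasurable (by fun_prop))).mpr ⟨?_, ?_⟩
  · filter_upwards [ae_restrict_mem measurableSet_Ioi] with t (ht : 0 < t)
    exact (integrable_mul_exp_neg_mul_sq (by positivity)).restrict
  · refine (integrableOn_inv_one_add_sq_add_mul hc).congr_fun (fun t (ht : 0 < t) ↦ ?_)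
      measurableSet_Ioi
    dsimp only
    rw [← integral_Ioi_mul_exp_quadratic hc ht]
    refine setIntegral_congr_fun measurableSet_Ioi fun x (hx : 0 < x) ↦ ?_
    exact (Real.norm_of_nonneg (by positivity)).symm

lemma integral_Ioi_integral_Ioi_exp {c : ℝ} (hc : 0 ≤ c) :
    ∫ x in Ioi (0 : ℝ), ∫ y in Ioi (0 : ℝ), exp (-(x ^ 2 + y ^ 2) / 2 - c * x * y)
      = ∫ t in Ioi (0 : ℝ), (1 + t ^ 2 + 2 * c * t)⁻¹ := calc
  _ = ∫ x in Ioi (0 : ℝ), ∫ t in Ioi (0 : ℝ),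
        x * exp (-((1 + t ^ 2 + 2 * c * t) / 2) * x ^ 2) :=
    setIntegral_congr_fun measurableSet_Ioi fun _ hx ↦
      integral_Ioi_exp_eq_integral_Ioi_mul_exp c hx
  _ = ∫ t in Ioi (0 : ℝ), ∫ x in Ioi (0 : ℝ),
        x * exp (-((1 + t ^ 2 + 2 * c * t) / 2) * x ^ 2) :=
    integral_integral_swap (integrable_mul_exp_quadratic_prod hc)
  _ = _ := setIntegral_congr_fun measurableSet_Ioi fun _ ht ↦
      integral_Ioi_mul_exp_quadratic hc ht

lemma integral_Ioi_inv_one_add_sq_add_mul {c : ℝ} (hc : 1 < c) :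
    ∫ t in Ioi (0 : ℝ), (1 + t ^ 2 + 2 * c * t)⁻¹ = (√(c ^ 2 - 1))⁻¹ * arcosh c := by
  set s := √(c ^ 2 - 1)
  have hs_sq : s ^ 2 = c ^ 2 - 1 := sq_sqrt (by nlinarith)
  have hs_pos : 0 < s := sqrt_pos.mpr (by nlinarith)
  have hsc : s < c := by nlinarith
  -- `1 + t ^ 2 + 2 * c * t = (t + (c - s)) * (t + (c + s))`, so partial fractions give `F`
  set F : ℝ → ℝ := fun t ↦ (2 * s)⁻¹ * (log (t + (c - s)) - log (t + (c + s)))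
  have hderiv : ∀ t ∈ Ici (0 : ℝ), HasDerivAt F (1 + t ^ 2 + 2 * c * t)⁻¹ t := by
    intro t (ht : 0 ≤ t)
    have h₁ : 0 < t + (c - s) := by linarith
    have h₂ : 0 < t + (c + s) := by linarith
    refine ((((hasDerivAt_id t).add_const _).log h₁.ne').sub
      (((hasDerivAt_id t).add_const _).log h₂.ne')).const_mul (2 * s)⁻¹ |>.congr_deriv ?_
    simp only [id]
    field_simp
    nlinarith
  have hlim : Tendsto F atTop (𝓝 ((2 * s)⁻¹ * 0)) := by
    refine ((tendsto_log_comp_add_sub_log (-(2 * s))).comp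
      (tendsto_atTop_add_const_right _ (c + s) tendsto_id)).const_mul _ |>.congr fun t ↦ ?_
    simp only [Function.comp_apply, id, F]
    ring_nf
  rw [integral_Ioi_of_hasDerivAt_of_nonneg' hderiv (fun t (ht : 0 < t) ↦ by positivity) hlim]
  have hinv : c - s = (c + s)⁻¹ := (add_sqrt_self_sq_sub_one_inv hc.le).symm
  simp only [F, zero_add, hinv, log_inv, arcosh]
  field_simp
  ring

lemma inv_sqrt_sq_sub_one_mul_arcosh_mem_Ioo {c : ℝ} (hc : 1 < c) :
    (√(c ^ 2 - 1))⁻¹ * arcosh c ∈ Ioo 0 1 := by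
  have ha := arcosh_pos hc
  rw [← sinh_arcosh hc.le]
  have hsinh : arcosh c < sinh (arcosh c) := self_lt_sinh_iff.mpr ha
  exact ⟨by positivity, (inv_mul_lt_one₀ (ha.trans hsinh)).mpr hsinh⟩

theorem alpha_n_value (n : ℕ) (hn : 2 ≤ n) :
    (∫ x in Ioi (0 : ℝ), ∫ y in Ioi (0 : ℝ),
        Real.exp (-(x ^ 2 + y ^ 2) / 2 - (n : ℝ) * x * y))
      = (Real.sqrt ((n : ℝ) ^ 2 - 1))⁻¹ * Real.log ((n : ℝ) + Real.sqrt ((n : ℝ) ^ 2 - 1)) ∧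
    (∫ x in Ioi (0 : ℝ), ∫ y in Ioi (0 : ℝ),
        Real.exp (-(x ^ 2 + y ^ 2) / 2 - (n : ℝ) * x * y)) ∈ Set.Ioo (0 : ℝ) 1 := by
  have hn₁ : (1 : ℝ) < n := by exact_mod_cast hn
  have hval := (integral_Ioi_integral_Ioi_exp n.cast_nonneg).trans
    (integral_Ioi_inv_one_add_sq_add_mul hn₁)
  exact ⟨hval, hval ▸ inv_sqrt_sq_sub_one_mul_arcosh_mem_Ioo hn₁⟩
end

section
/- For every integer m ≥ 1 and every θ ∈ (0,1), χ_{2m+1}(θ) < 0. In particular, the coefficient ξ_{2m}(θ) = (2m)!·χ_{2m+1}(θ) is nonzero for θ ∈ (0,1). -/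
open Real MeasureTheory Set

/-- `χ_m^{++}(θ)`. -/
noncomputable def chiPP (m : ℕ) (θ : ℝ) : ℝ :=
  ∫ x in Ici (0 : ℝ), ∫ y in Ici (0 : ℝ), (k θ x y) ^ m * p θ x y * μinv θ x

/-- `χ_m^{--}(θ)`. -/
noncomputable def chiMM (m : ℕ) (θ : ℝ) : ℝ :=
  ∫ x in Iic (0 : ℝ), ∫ y in Iic (0 : ℝ), (k θ x y) ^ m * p θ x y * μinv θ x

/-- `χ_m^{+-}(θ)`. -/
noncomputable def chiPM (m : ℕ) (θ : ℝ) : ℝ :=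
  ∫ x in Ici (0 : ℝ), ∫ y in Iic (0 : ℝ), (k θ x y) ^ m * p θ x y * μinv θ x

/-- `χ_m^{-+}(θ)`. -/
noncomputable def chiMP (m : ℕ) (θ : ℝ) : ℝ :=
  ∫ x in Iic (0 : ℝ), ∫ y in Ici (0 : ℝ), (k θ x y) ^ m * p θ x y * μinv θ x

/-- `χ_m(θ)`, the sum over the four quadrants. -/
noncomputable def chi (m : ℕ) (θ : ℝ) : ℝ :=
  chiPP m θ + chiMM m θ + chiPM m θ + chiMP m θ

/-- `ζ_m(θ)`. -/
noncomputable def zeta (m : ℕ) (θ : ℝ) : ℝ :=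
  chiPP m θ + chiPM m θ - chiMM m θ - chiMP m θ

/-!
On the open quadrant `x, y > 0` write `G = exp (-(x + y)² / 2)` and `E = exp (2xy) > 1`. Since
`exp (-(x - y)² / 2) = G E`, on the two diagonal quadrants the Gaussian factor of `p` cancels one
power of the denominator of `k`, and all four quadrant integrands become `G` times explicit
bounded factors. Folding the quadrants onto one gives, for odd exponent `2m + 1`,

  `√(2π) χ_{2m+1}(θ) = ∫∫ G [(1+θ)/(θ+E)^{2m} - (1-θ)/(E-θ)^{2m}`
                            `- (1+θ)/(1-θ)^{2m} + (1-θ)/(1+θ)^{2m}]`,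

and the bracket is negative pointwise: its first two terms add up to at most
`2θ/(θ+E)^{2m} < 2θ`, its last two to at most `-2θ`.
-/

noncomputable def chiDensity (n : ℕ) (θ x y : ℝ) : ℝ := k θ x y ^ n * p θ x y * μinv θ x

noncomputable def foldedChiDensity (n : ℕ) (θ : ℝ) (z : ℝ × ℝ) : ℝ :=
  chiDensity n θ z.1 z.2 + chiDensity n θ (-z.1) (-z.2) + chiDensity n θ z.1 (-z.2) +
    chiDensity n θ (-z.1) z.2

lemma one_lt_exp_two_mul_mul {x y : ℝ} (hx : 0 < x) (hy : 0 < y) : 1 < exp (2 * (x * y)) :=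
  one_lt_exp_iff.2 (by positivity)

lemma exp_neg_sub_sq_eq_mul {x y : ℝ} :
    exp (-(x - y) ^ 2 / 2) = exp (-(x + y) ^ 2 / 2) * exp (2 * (x * y)) := by
  rw [← exp_add]; ring_nf

lemma chiDensity_pos_pos (n : ℕ) {θ x y : ℝ} (hθ : -1 ≤ θ) (hx : 0 < x) (hy : 0 < y) :
    chiDensity (n + 1) θ x y =
      (√(2 * π))⁻¹ * (1 + θ) / (θ + exp (2 * (x * y))) ^ n * exp (-(x + y) ^ 2 / 2) := by
  have hE := one_lt_exp_two_mul_mul hx hy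
  have hden : θ + exp (2 * (x * y)) ≠ 0 := by linarith
  rw [chiDensity, k, p, μinv, sign_of_pos hy, if_pos ⟨hx.le, hy.le⟩, if_pos hx.le,
    max_eq_right (by positivity), exp_neg_sub_sq_eq_mul, div_pow, pow_succ, one_mul]
  generalize exp (2 * (x * y)) = E at hden ⊢
  field_simp
  ring

lemma chiDensity_neg_neg (n : ℕ) {θ x y : ℝ} (hθ : θ ≤ 1) (hx : 0 < x) (hy : 0 < y) :
    chiDensity (n + 1) θ (-x) (-y) =
      (-1) ^ (n + 1) * (√(2 * π))⁻¹ * (1 - θ) / (-θ + exp (2 * (x * y))) ^ n *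
        exp (-(x + y) ^ 2 / 2) := by
  have hE := one_lt_exp_two_mul_mul hx hy
  have hden : -θ + exp (2 * (x * y)) ≠ 0 := by linarith
  rw [chiDensity, k, p, μinv, sign_of_neg (neg_neg_of_pos hy), neg_mul_neg,
    if_neg (fun h => by linarith [h.1]), if_pos ⟨by linarith, by linarith⟩,
    if_neg (by linarith), max_eq_right (by positivity), show -x - -y = -(x - y) by ring,
    show -x + -y = -(x + y) by ring, neg_sq, neg_sq, exp_neg_sub_sq_eq_mul, div_pow,
    pow_succ (-1 * θ + _), neg_one_mul]
  generalize exp (2 * (x * y)) = E at hden ⊢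
  field_simp
  ring

lemma chiDensity_pos_neg (n : ℕ) (θ : ℝ) {x y : ℝ} (hx : 0 < x) (hy : 0 < y) :
    chiDensity n θ x (-y) =
      (-(1 - θ)⁻¹) ^ n * ((√(2 * π))⁻¹ * (1 - θ)) * (1 + θ) *
        exp (-(x + y) ^ 2 / 2) := by
  rw [chiDensity, k, p, μinv, sign_of_neg (neg_neg_of_pos hy),
    max_eq_left (by nlinarith), if_neg (fun h => by linarith [h.2]),
    if_neg (fun h => by linarith [h.1]), if_pos hx.le, if_pos hx.le, sub_neg_eq_add]
  simp only [mul_zero, exp_zero]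
  ring

lemma chiDensity_neg_pos (n : ℕ) (θ : ℝ) {x y : ℝ} (hx : 0 < x) (hy : 0 < y) :
    chiDensity n θ (-x) y =
      ((1 + θ)⁻¹) ^ n * ((√(2 * π))⁻¹ * (1 + θ)) * (1 - θ) *
        exp (-(x + y) ^ 2 / 2) := by
  rw [chiDensity, k, p, μinv, sign_of_pos hy,
    max_eq_left (by nlinarith), if_neg (fun h => by linarith [h.1]),
    if_neg (fun h => by linarith [h.2]), if_neg (by linarith), if_neg (by linarith),
    ← neg_add', neg_sq]
  simp only [mul_zero, exp_zero]
  ring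

lemma exp_neg_add_sq_le {x y : ℝ} (hx : 0 ≤ x) (hy : 0 ≤ y) :
    exp (-(x + y) ^ 2 / 2) ≤ exp (-(1 / 2) * x ^ 2) * exp (-(1 / 2) * y ^ 2) := by
  rw [← exp_add]
  exact exp_le_exp.2 (by nlinarith [mul_nonneg hx hy])

lemma integrableOn_exp_neg_add_sq :
    IntegrableOn (fun z : ℝ × ℝ => exp (-(z.1 + z.2) ^ 2 / 2)) (Ioi 0 ×ˢ Ioi 0) := by
  have hgauss := integrable_exp_neg_mul_sq (b := 1 / 2) (by norm_num)
  refine (hgauss.mul_prod hgauss).integrableOn.mono' (by fun_prop)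
    (ae_restrict_of_forall_mem (measurableSet_Ioi.prod measurableSet_Ioi) fun z hz => ?_)
  rw [norm_of_nonneg (exp_pos _).le]
  exact exp_neg_add_sq_le (le_of_lt hz.1) (le_of_lt hz.2)

lemma integrableOn_div_pow_mul_exp_neg_add_sq (a : ℝ) {b : ℝ} (hb : -1 < b) (n : ℕ) :
    IntegrableOn
      (fun z : ℝ × ℝ => a / (b + exp (2 * (z.1 * z.2))) ^ n * exp (-(z.1 + z.2) ^ 2 / 2))
      (Ioi 0 ×ˢ Ioi 0) := by
  refine integrableOn_exp_neg_add_sq.bdd_mul (c := |a| / (1 + b) ^ n)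
    (by fun_prop : Measurable fun z : ℝ × ℝ =>
      a / (b + exp (2 * (z.1 * z.2))) ^ n).aestronglyMeasurable
    (ae_restrict_of_forall_mem (measurableSet_Ioi.prod measurableSet_Ioi) fun z hz => ?_)
  have hE : 1 + b ≤ b + exp (2 * (z.1 * z.2)) := by
    linarith [(one_lt_exp_two_mul_mul hz.1 hz.2).le]
  rw [norm_eq_abs, abs_div, abs_pow, abs_of_pos (by linarith : 0 < b + exp (2 * (z.1 * z.2)))]
  exact div_le_div_of_nonneg_left (abs_nonneg a) (pow_pos (by linarith) n)
    (pow_le_pow_left₀ (by linarith) hE n)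

lemma integrableOn_chiDensity (n : ℕ) {θ : ℝ} (hθ : θ ∈ Ioo (-1) 1) :
    IntegrableOn (fun z : ℝ × ℝ => chiDensity (n + 1) θ z.1 z.2) (Ioi 0 ×ˢ Ioi 0) ∧
    IntegrableOn (fun z : ℝ × ℝ => chiDensity (n + 1) θ (-z.1) (-z.2)) (Ioi 0 ×ˢ Ioi 0) ∧
    IntegrableOn (fun z : ℝ × ℝ => chiDensity (n + 1) θ z.1 (-z.2)) (Ioi 0 ×ˢ Ioi 0) ∧
    IntegrableOn (fun z : ℝ × ℝ => chiDensity (n + 1) θ (-z.1) z.2) (Ioi 0 ×ˢ Ioi 0) := by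
  have hQ : MeasurableSet (Ioi (0 : ℝ) ×ˢ Ioi (0 : ℝ)) :=
    measurableSet_Ioi.prod measurableSet_Ioi
  refine ⟨?_, ?_, ?_, ?_⟩
  · exact (integrableOn_div_pow_mul_exp_neg_add_sq _ hθ.1 n).congr_fun
      (fun z hz => (chiDensity_pos_pos n hθ.1.le hz.1 hz.2).symm) hQ
  · exact (integrableOn_div_pow_mul_exp_neg_add_sq _ (neg_lt_neg hθ.2) n).congr_fun
      (fun z hz => (chiDensity_neg_neg n hθ.2.le hz.1 hz.2).symm) hQ
  · exact IntegrableOn.congr_fun (integrableOn_exp_neg_add_sq.const_mul _)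
      (fun z hz => (chiDensity_pos_neg (n + 1) θ hz.1 hz.2).symm) hQ
  · exact IntegrableOn.congr_fun (integrableOn_exp_neg_add_sq.const_mul _)
      (fun z hz => (chiDensity_neg_pos (n + 1) θ hz.1 hz.2).symm) hQ

lemma integral_Iic_zero_eq (f : ℝ → ℝ) : ∫ x in Iic 0, f x = ∫ x in Ioi 0, f (-x) := by
  rw [integral_comp_neg_Ioi, neg_zero]

lemma chi_succ_eq_setIntegral (n : ℕ) {θ : ℝ} (hθ : θ ∈ Ioo (-1) 1) :
    chi (n + 1) θ = ∫ z in Ioi 0 ×ˢ Ioi 0, foldedChiDensity (n + 1) θ z := by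
  obtain ⟨hPP, hMM, hPM, hMP⟩ := integrableOn_chiDensity n hθ
  have ePP : chiPP (n + 1) θ = ∫ z in Ioi 0 ×ˢ Ioi 0, chiDensity (n + 1) θ z.1 z.2 := by
    rw [Measure.volume_eq_prod, setIntegral_prod _ hPP]
    simp only [chiPP, integral_Ici_eq_integral_Ioi]; rfl
  have eMM : chiMM (n + 1) θ = ∫ z in Ioi 0 ×ˢ Ioi 0, chiDensity (n + 1) θ (-z.1) (-z.2) := by
    rw [Measure.volume_eq_prod, setIntegral_prod _ hMM]
    simp only [chiMM, integral_Iic_zero_eq]; rfl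
  have ePM : chiPM (n + 1) θ = ∫ z in Ioi 0 ×ˢ Ioi 0, chiDensity (n + 1) θ z.1 (-z.2) := by
    rw [Measure.volume_eq_prod, setIntegral_prod _ hPM]
    simp only [chiPM, integral_Ici_eq_integral_Ioi, integral_Iic_zero_eq]; rfl
  have eMP : chiMP (n + 1) θ = ∫ z in Ioi 0 ×ˢ Ioi 0, chiDensity (n + 1) θ (-z.1) z.2 := by
    rw [Measure.volume_eq_prod, setIntegral_prod _ hMP]
    simp only [chiMP, integral_Ici_eq_integral_Ioi, integral_Iic_zero_eq]; rfl
  rw [chi, ePP, eMM, ePM, eMP]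
  unfold foldedChiDensity
  rw [integral_add ?_ hMP, integral_add ?_ hPM, integral_add hPP hMM]
  exacts [hPP.add hMM, (hPP.add hMM).add hPM]

lemma integrableOn_foldedChiDensity (n : ℕ) {θ : ℝ} (hθ : θ ∈ Ioo (-1) 1) :
    IntegrableOn (foldedChiDensity (n + 1) θ) (Ioi 0 ×ˢ Ioi 0) :=
  let ⟨hPP, hMM, hPM, hMP⟩ := integrableOn_chiDensity n hθ
  ((hPP.add hMM).add hPM).add hMP

lemma setIntegral_neg_of_forall_neg {X : Type*} [MeasurableSpace X] {μ : Measure X} {s : Set X}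
    {f : X → ℝ} (hs : MeasurableSet s) (hμs : μ s ≠ 0) (hf : IntegrableOn f s μ)
    (hneg : ∀ x ∈ s, f x < 0) : ∫ x in s, f x ∂μ < 0 := by
  have hsupp : s ⊆ Function.support (fun x => -f x) := fun x hx => (neg_pos.2 (hneg x hx)).ne'
  have hpos : 0 < ∫ x in s, -f x ∂μ := by
    refine (setIntegral_pos_iff_support_of_nonneg_ae
      (ae_restrict_of_forall_mem hs fun x hx => (neg_pos.2 (hneg x hx)).le) hf.neg).2 ?_
    rwa [inter_eq_right.2 hsupp, pos_iff_ne_zero]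
  rw [integral_neg] at hpos
  linarith

lemma chi_bracket_neg {N : ℕ} (hN : N ≠ 0) {θ E : ℝ} (hθ : θ ∈ Ioo 0 1) (hE : 1 < E) :
    (1 + θ) / (θ + E) ^ N - (1 - θ) / (-θ + E) ^ N
      - (1 - θ)⁻¹ ^ N * (1 + θ) + (1 + θ)⁻¹ ^ N * (1 - θ) < 0 := by
  obtain ⟨hθ0, hθ1⟩ := hθ
  have hshift : (1 - θ) / (θ + E) ^ N ≤ (1 - θ) / (-θ + E) ^ N :=
    div_le_div_of_nonneg_left (by linarith) (pow_pos (by linarith) N)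
      (pow_le_pow_left₀ (by linarith) (by linarith) N)
  have hdecay : 2 * θ / (θ + E) ^ N < 2 * θ :=
    div_lt_self (by linarith) (one_lt_pow₀ (by linarith) hN)
  have hgrow : 1 ≤ (1 - θ)⁻¹ ^ N :=
    one_le_pow₀ ((one_le_inv₀ (by linarith)).2 (by linarith))
  have hshrink : (1 + θ)⁻¹ ^ N ≤ 1 :=
    pow_le_one₀ (by positivity) (inv_le_one_of_one_le₀ (by linarith))
  have hsplit : (1 + θ) / (θ + E) ^ N = 2 * θ / (θ + E) ^ N + (1 - θ) / (θ + E) ^ N := by ring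
  nlinarith

lemma foldedChiDensity_odd_neg {m : ℕ} (hm : 1 ≤ m) {θ : ℝ} (hθ : θ ∈ Ioo 0 1)
    {z : ℝ × ℝ} (hz : z ∈ Ioi 0 ×ˢ Ioi 0) : foldedChiDensity (2 * m + 1) θ z < 0 := by
  obtain ⟨hθ0, hθ1⟩ := hθ
  have hodd := odd_two_mul_add_one m
  have hfold : foldedChiDensity (2 * m + 1) θ z = (√(2 * π))⁻¹ * exp (-(z.1 + z.2) ^ 2 / 2) *
      ((1 + θ) / (θ + exp (2 * (z.1 * z.2))) ^ (2 * m)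
        - (1 - θ) / (-θ + exp (2 * (z.1 * z.2))) ^ (2 * m)
        - (1 - θ)⁻¹ ^ (2 * m) * (1 + θ) + (1 + θ)⁻¹ ^ (2 * m) * (1 - θ)) := by
    rw [foldedChiDensity, chiDensity_pos_pos _ (by linarith) hz.1 hz.2,
      chiDensity_neg_neg _ hθ1.le hz.1 hz.2, chiDensity_pos_neg _ _ hz.1 hz.2,
      chiDensity_neg_pos _ _ hz.1 hz.2, hodd.neg_pow, one_pow, hodd.neg_pow, pow_succ (1 - θ)⁻¹,
      pow_succ (1 + θ)⁻¹]
    field_simp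
    ring
  rw [hfold]
  exact mul_neg_of_pos_of_neg (by positivity)
    (chi_bracket_neg (by omega) ⟨hθ0, hθ1⟩ (one_lt_exp_two_mul_mul hz.1 hz.2))

theorem chi_odd_neg (m : ℕ) (hm : 1 ≤ m) (θ : ℝ) (hθ : θ ∈ Set.Ioo (0 : ℝ) 1) :
    chi (2 * m + 1) θ < 0 ∧ ((2 * m).factorial : ℝ) * chi (2 * m + 1) θ ≠ 0 := by
  have hθ' : θ ∈ Ioo (-1) 1 := ⟨by linarith [hθ.1], hθ.2⟩
  have hQ : MeasurableSet (Ioi (0 : ℝ) ×ˢ Ioi (0 : ℝ)) :=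
    measurableSet_Ioi.prod measurableSet_Ioi
  have hQ_ne : volume (Ioi (0 : ℝ) ×ˢ Ioi (0 : ℝ)) ≠ 0 :=
    (isOpen_Ioi.prod isOpen_Ioi).measure_ne_zero volume ⟨(1, 1), by simp⟩
  have hneg : chi (2 * m + 1) θ < 0 := by
    rw [chi_succ_eq_setIntegral (2 * m) hθ']
    exact setIntegral_neg_of_forall_neg hQ hQ_ne (integrableOn_foldedChiDensity (2 * m) hθ')
      fun z hz => foldedChiDensity_odd_neg hm hθ hz
  exact ⟨hneg, mul_ne_zero (by positivity) hneg.ne⟩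
end

section
/- For every θ ∈ (−1,1), χ_2(θ) = (2/√(2π))·[(1+θ²)/(1−θ²) + √(2π)·χ_2^{++}(0) − θ²·𝓘(θ)], where 𝓘(θ) := ∫_0^∞∫_0^∞ (1−e^{−2xy})/(1−θ²e^{−4xy}) · e^{−4xy − (x+y)²/2} dx dy. -/
open Real MeasureTheory Set

/-- `𝓘(θ)`. -/
noncomputable def scrI (θ : ℝ) : ℝ :=
  ∫ x in Ioi (0 : ℝ), ∫ y in Ioi (0 : ℝ),
    (1 - Real.exp (-2 * x * y)) / (1 - θ ^ 2 * Real.exp (-4 * x * y)) *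
      Real.exp (-4 * x * y - (x + y) ^ 2 / 2)

/-!
On every quadrant the integrand `k θ x y ^ 2 * p θ x y * μinv θ x` is `(2π)^{-1/2}` times a
bounded weight times `e^{-(x+y)²/2}`, because `e^{-(x-y)²/2} = e^{2xy} e^{-(x+y)²/2}` cancels the
denominator of `k`. On the two mixed quadrants the weight is the constant `(1 ± θ)/(1 ∓ θ)`, and
`∬_{x,y>0} e^{-(x+y)²/2} = ∫_0^∞ u e^{-u²/2} du = 1`. On the two diagonal quadrants the weights
are `(1 + θ)/(θ + E)` and `(1 - θ)/(E - θ)` with `E = e^{2xy}`; their sum is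
`2/E - 2θ² (1 - E⁻¹) E⁻² / (1 - θ² E⁻²)`, whose two terms are the integrands of `√(2π) χ₂^{++}(0)`
and of `𝓘(θ)`.
-/

local notation "μQ" => Measure.prod (Measure.restrict volume (Ioi (0 : ℝ))) (Measure.restrict volume (Ioi (0 : ℝ)))

lemma integrable_exp_neg_sq_div {c : ℝ} (hc : 0 < c) :
    Integrable fun x : ℝ => exp (-x ^ 2 / c) := by
  simpa [neg_div, div_eq_inv_mul] using integrable_exp_neg_mul_sq (inv_pos.2 hc)

lemma integral_Ioi_mul_exp_neg_sq_half : ∫ u in Ioi (0 : ℝ), u * exp (-u ^ 2 / 2) = 1 := by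
  have h := integral_rpow_mul_exp_neg_mul_rpow (p := 2) (q := 1) (b := 1 / 2)
    (by norm_num) (by norm_num) (by norm_num)
  norm_num [Real.Gamma_one] at h
  convert h using 3 with u
  ring_nf

lemma integral_Ioi_exp_neg_add_sq_half (x : ℝ) :
    ∫ y in Ioi (0 : ℝ), exp (-(x + y) ^ 2 / 2) = ∫ u in Ioi x, exp (-u ^ 2 / 2) := by
  simpa using (measurePreserving_add_left volume x).setIntegral_preimage_emb
    (measurableEmbedding_addLeft x) (fun u => exp (-u ^ 2 / 2)) (Ioi x)

lemma exp_neg_add_sq_half_le {x y : ℝ} (hx : 0 ≤ x) (hy : 0 ≤ y) :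
    exp (-(x + y) ^ 2 / 2) ≤ exp (-x ^ 2 / 2) * exp (-y ^ 2 / 2) := by
  rw [← exp_add]
  exact exp_le_exp.2 (by nlinarith [mul_nonneg hx hy])

lemma exp_neg_sub_sq_half (x y : ℝ) :
    exp (-(x - y) ^ 2 / 2) = exp (2 * x * y) * exp (-(x + y) ^ 2 / 2) := by
  rw [← exp_add]
  ring_nf

lemma integrable_quadrant_of_norm_le_gaussian {F : ℝ × ℝ → ℝ} {C a b : ℝ} (ha : 0 < a)
    (hb : 0 < b) (hF : AEStronglyMeasurable F μQ)
    (hle : ∀ x > 0, ∀ y > 0, ‖F (x, y)‖ ≤ C * (exp (-x ^ 2 / a) * exp (-y ^ 2 / b))) :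
    Integrable F μQ := by
  refine (((integrable_exp_neg_sq_div ha).restrict.mul_prod
    (integrable_exp_neg_sq_div hb).restrict).const_mul C).mono' hF ?_
  rw [Measure.prod_restrict]
  filter_upwards [ae_restrict_mem (measurableSet_Ioi.prod measurableSet_Ioi)] with z hz
  exact hle z.1 hz.1 z.2 hz.2

noncomputable def gaussQuadrant (g : ℝ → ℝ → ℝ) : ℝ :=
  ∫ x in Ioi (0 : ℝ), ∫ y in Ioi (0 : ℝ), g x y * exp (-(x + y) ^ 2 / 2)

lemma integrable_gaussQuadrant_integrand {g : ℝ → ℝ → ℝ} {C : ℝ}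
    (hg : Measurable fun z : ℝ × ℝ => g z.1 z.2) (hC : ∀ x > 0, ∀ y > 0, |g x y| ≤ C) :
    Integrable (fun z : ℝ × ℝ => g z.1 z.2 * exp (-(z.1 + z.2) ^ 2 / 2)) μQ := by
  refine integrable_quadrant_of_norm_le_gaussian (C := C) two_pos two_pos
    (hg.mul (by fun_prop)).aestronglyMeasurable fun x hx y hy => ?_
  rw [norm_mul, norm_of_nonneg (exp_pos _).le, norm_eq_abs]
  exact mul_le_mul (hC x hx y hy) (exp_neg_add_sq_half_le hx.le hy.le) (exp_pos _).le
    ((abs_nonneg _).trans (hC x hx y hy))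

lemma gaussQuadrant_eq_integral_prod {g : ℝ → ℝ → ℝ}
    (hg : Integrable (fun z : ℝ × ℝ => g z.1 z.2 * exp (-(z.1 + z.2) ^ 2 / 2)) μQ) :
    gaussQuadrant g = ∫ z, g z.1 z.2 * exp (-(z.1 + z.2) ^ 2 / 2) ∂μQ :=
  (integral_prod _ hg).symm

-- Substitute `u = x + y` and integrate over the triangle `0 < x < u` in the other order.
lemma gaussQuadrant_one : gaussQuadrant (fun _ _ => 1) = 1 := by
  set F : ℝ → ℝ → ℝ := fun x u => (Ioi x).indicator (fun u => exp (-u ^ 2 / 2)) u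
  have hF : Integrable (Function.uncurry F) μQ := by
    refine integrable_quadrant_of_norm_le_gaussian (C := 1) four_pos four_pos
      (Measurable.indicator (by fun_prop) (measurableSet_lt measurable_fst measurable_snd)
        |>.aestronglyMeasurable) fun x hx u hu => ?_
    simp only [Function.uncurry_apply_pair, F, indicator, mem_Ioi]
    split_ifs with hxu
    · rw [one_mul, norm_of_nonneg (exp_pos _).le, ← exp_add]
      exact exp_le_exp.2 (by nlinarith)
    · rw [norm_zero]
      positivity
  have hinner : ∀ x > (0 : ℝ),
      ∫ y in Ioi (0 : ℝ), 1 * exp (-(x + y) ^ 2 / 2) = ∫ u in Ioi (0 : ℝ), F x u := by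
    intro x hx
    rw [setIntegral_indicator measurableSet_Ioi, Ioi_inter_Ioi, max_eq_right hx.le]
    simpa using integral_Ioi_exp_neg_add_sq_half x
  have houter : ∀ u > (0 : ℝ), ∫ x in Ioi (0 : ℝ), F x u = u * exp (-u ^ 2 / 2) := by
    intro u hu
    have hFu : ∀ x, F x u = (Iio u).indicator (fun _ => exp (-u ^ 2 / 2)) x := fun x => by
      simp [F, indicator]
    simp_rw [hFu]
    rw [setIntegral_indicator measurableSet_Iio, Ioi_inter_Iio, setIntegral_const,
      volume_real_Ioo_of_le hu.le, sub_zero, smul_eq_mul]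
  calc gaussQuadrant (fun _ _ => 1)
      = ∫ x in Ioi (0 : ℝ), ∫ u in Ioi (0 : ℝ), F x u :=
        setIntegral_congr_fun measurableSet_Ioi hinner
    _ = ∫ u in Ioi (0 : ℝ), ∫ x in Ioi (0 : ℝ), F x u := integral_integral_swap hF
    _ = 1 := by
        rw [setIntegral_congr_fun measurableSet_Ioi houter, integral_Ioi_mul_exp_neg_sq_half]

lemma integral_Iic_zero_eq_integral_Ici_neg (f : ℝ → ℝ) :
    ∫ x in Iic (0 : ℝ), f x = ∫ x in Ici (0 : ℝ), f (-x) := by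
  rw [integral_Ici_eq_integral_Ioi, integral_comp_neg_Ioi, neg_zero]

lemma integral_Ici_Ici_eq_mul_gaussQuadrant {F g : ℝ → ℝ → ℝ} (c : ℝ)
    (h : ∀ x > 0, ∀ y > 0, F x y = c * (g x y * exp (-(x + y) ^ 2 / 2))) :
    ∫ x in Ici (0 : ℝ), ∫ y in Ici (0 : ℝ), F x y = c * gaussQuadrant g := by
  rw [gaussQuadrant, ← integral_const_mul, integral_Ici_eq_integral_Ioi]
  refine setIntegral_congr_fun measurableSet_Ioi fun x hx => ?_
  rw [← integral_const_mul, integral_Ici_eq_integral_Ioi]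
  exact setIntegral_congr_fun measurableSet_Ioi fun y hy => h x hx y hy

noncomputable def weightPos (θ x y : ℝ) : ℝ := (1 + θ) / (θ + exp (2 * x * y))

noncomputable def weightNeg (θ x y : ℝ) : ℝ := (1 - θ) / (exp (2 * x * y) - θ)

noncomputable def scrIWeight (θ x y : ℝ) : ℝ :=
  (1 - exp (-2 * x * y)) / (1 - θ ^ 2 * exp (-4 * x * y)) * exp (-4 * x * y)

section Quadrants

variable {θ : ℝ}

lemma chiPP_two (hθ : -1 < θ) :
    chiPP 2 θ = (√(2 * π))⁻¹ * gaussQuadrant (weightPos θ) := by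
  refine integral_Ici_Ici_eq_mul_gaussQuadrant _ fun x hx y hy => ?_
  have hE : 1 ≤ exp (2 * x * y) := one_le_exp (by positivity)
  have hden : θ + exp (2 * x * y) ≠ 0 := by linarith
  rw [k, p, μinv, sign_of_pos hy, if_pos ⟨hx.le, hy.le⟩, if_pos hx.le,
    max_eq_right (by positivity), ← mul_assoc, exp_neg_sub_sq_half, weightPos]
  field_simp
  ring

lemma chiMM_two (hθ : θ < 1) :
    chiMM 2 θ = (√(2 * π))⁻¹ * gaussQuadrant (weightNeg θ) := by
  simp only [chiMM, integral_Iic_zero_eq_integral_Ici_neg]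
  refine integral_Ici_Ici_eq_mul_gaussQuadrant _ fun x hx y hy => ?_
  have hE : 1 ≤ exp (2 * x * y) := one_le_exp (by positivity)
  have hden : exp (2 * x * y) - θ ≠ 0 := by linarith
  rw [k, p, μinv, sign_of_neg (neg_lt_zero.2 hy), if_neg (fun h => by linarith [h.1]),
    if_pos ⟨by linarith, by linarith⟩, if_neg (by linarith), neg_mul_neg,
    max_eq_right (by positivity), ← mul_assoc, neg_one_mul, neg_add_eq_sub,
    show -x - -y = -(x - y) by ring, show -x + -y = -(x + y) by ring, neg_sq, neg_sq,
    exp_neg_sub_sq_half, weightNeg]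
  field_simp

lemma chiPM_two (hθ : θ < 1) :
    chiPM 2 θ = (√(2 * π))⁻¹ * ((1 + θ) / (1 - θ)) := by
  simp only [chiPM, integral_Iic_zero_eq_integral_Ici_neg]
  refine (integral_Ici_Ici_eq_mul_gaussQuadrant (g := fun _ _ => 1) _ fun x hx y hy => ?_).trans
    (by rw [gaussQuadrant_one, mul_one])
  have hden : 1 - θ ≠ 0 := by linarith
  rw [k, p, μinv, sign_of_neg (neg_lt_zero.2 hy), if_neg (fun h => by linarith [h.2]),
    if_neg (fun h => by linarith [h.1]), if_pos hx.le, if_pos hx.le, max_eq_left (by nlinarith),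
    mul_zero, exp_zero, sub_neg_eq_add, neg_one_mul, neg_add_eq_sub]
  field_simp

lemma chiMP_two (hθ : -1 < θ) :
    chiMP 2 θ = (√(2 * π))⁻¹ * ((1 - θ) / (1 + θ)) := by
  rw [chiMP, integral_Iic_zero_eq_integral_Ici_neg]
  refine (integral_Ici_Ici_eq_mul_gaussQuadrant (g := fun _ _ => 1) _ fun x hx y hy => ?_).trans
    (by rw [gaussQuadrant_one, mul_one])
  have hden : 1 + θ ≠ 0 := by linarith
  rw [k, p, μinv, sign_of_pos hy, if_neg (fun h => by linarith [h.1]),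
    if_neg (fun h => by linarith [h.2]), if_neg (by linarith), if_neg (by linarith),
    max_eq_left (by nlinarith), mul_zero, exp_zero, one_mul θ, add_comm θ,
    show -x - y = -(x + y) by ring, neg_sq]
  field_simp

end Quadrants

section Weights

variable {θ x y : ℝ}

lemma abs_weightPos_le_one (hθ : -1 < θ) (hxy : 0 ≤ x * y) : |weightPos θ x y| ≤ 1 := by
  have hE : 1 ≤ exp (2 * x * y) := one_le_exp (by nlinarith)
  rw [weightPos, abs_of_pos (div_pos (by linarith) (by linarith))]
  exact div_le_one_of_le₀ (by linarith) (by linarith)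

lemma abs_weightNeg_le_one (hθ : θ < 1) (hxy : 0 ≤ x * y) : |weightNeg θ x y| ≤ 1 := by
  have hE : 1 ≤ exp (2 * x * y) := one_le_exp (by nlinarith)
  rw [weightNeg, abs_of_pos (div_pos (by linarith) (by linarith))]
  exact div_le_one_of_le₀ (by linarith) (by linarith)

lemma abs_scrIWeight_le (hθ : θ ^ 2 < 1) (hxy : 0 ≤ x * y) :
    |scrIWeight θ x y| ≤ (1 - θ ^ 2)⁻¹ := by
  have ha : exp (-2 * x * y) ≤ 1 := exp_le_one_iff.2 (by nlinarith)
  have hb : exp (-4 * x * y) ≤ 1 := exp_le_one_iff.2 (by nlinarith)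
  have hb0 := exp_pos (-4 * x * y)
  have hden : 1 - θ ^ 2 ≤ 1 - θ ^ 2 * exp (-4 * x * y) := by nlinarith
  have hfrac_nonneg : 0 ≤ (1 - exp (-2 * x * y)) / (1 - θ ^ 2 * exp (-4 * x * y)) :=
    div_nonneg (by linarith) (by linarith)
  have hfrac_le : (1 - exp (-2 * x * y)) / (1 - θ ^ 2 * exp (-4 * x * y)) ≤ (1 - θ ^ 2)⁻¹ := by
    rw [inv_eq_one_div]
    exact div_le_div₀ zero_le_one (by linarith [exp_pos (-2 * x * y)]) (by linarith) hden
  rw [scrIWeight, abs_of_nonneg (mul_nonneg hfrac_nonneg hb0.le)]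
  exact (mul_le_of_le_one_right hfrac_nonneg hb).trans hfrac_le

lemma weightPos_add_weightNeg (hθ : θ ^ 2 < 1) (hxy : 0 ≤ x * y) :
    weightPos θ x y + weightNeg θ x y = 2 * weightPos 0 x y - 2 * θ ^ 2 * scrIWeight θ x y := by
  have hE : 1 ≤ exp (2 * x * y) := one_le_exp (by nlinarith)
  have h2 : exp (-2 * x * y) = (exp (2 * x * y))⁻¹ := by rw [← exp_neg]; ring_nf
  have h4 : exp (-4 * x * y) = (exp (2 * x * y))⁻¹ ^ 2 := by
    rw [← exp_neg, ← exp_nat_mul]; ring_nf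
  rw [weightPos, weightPos, weightNeg, scrIWeight, h2, h4, zero_add, add_zero]
  set E := exp (2 * x * y)
  have hθ' : |θ| < 1 := by rwa [sq_lt_one_iff_abs_lt_one] at hθ
  have h₁ : θ + E ≠ 0 := by linarith [neg_abs_le θ]
  have h₂ : E - θ ≠ 0 := by linarith [le_abs_self θ]
  have h₃ : E ^ 2 - θ ^ 2 ≠ 0 := by nlinarith [abs_nonneg θ, sq_abs θ]
  field_simp
  ring

end Weights

lemma scrI_eq_gaussQuadrant (θ : ℝ) : scrI θ = gaussQuadrant (scrIWeight θ) := by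
  simp only [scrI, gaussQuadrant, scrIWeight, sub_eq_add_neg, exp_add, neg_div, mul_assoc]

lemma gaussQuadrant_weightPos_add_weightNeg {θ : ℝ} (hθ : θ ^ 2 < 1) :
    gaussQuadrant (weightPos θ) + gaussQuadrant (weightNeg θ) =
      2 * gaussQuadrant (weightPos 0) - 2 * θ ^ 2 * scrI θ := by
  have hθ' : -1 < θ ∧ θ < 1 := by rwa [sq_lt_one_iff_abs_lt_one, abs_lt] at hθ
  have hP := integrable_gaussQuadrant_integrand (g := weightPos θ) (by unfold weightPos; fun_prop)
    fun x hx y hy => abs_weightPos_le_one hθ'.1 (by positivity)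
  have hN := integrable_gaussQuadrant_integrand (g := weightNeg θ) (by unfold weightNeg; fun_prop)
    fun x hx y hy => abs_weightNeg_le_one hθ'.2 (by positivity)
  have hB := integrable_gaussQuadrant_integrand (g := weightPos 0) (by unfold weightPos; fun_prop)
    fun x hx y hy => abs_weightPos_le_one neg_one_lt_zero (by positivity)
  have hS := integrable_gaussQuadrant_integrand (g := scrIWeight θ)
    (by unfold scrIWeight; fun_prop) fun x hx y hy => abs_scrIWeight_le hθ (by positivity)
  rw [scrI_eq_gaussQuadrant, gaussQuadrant_eq_integral_prod hP, gaussQuadrant_eq_integral_prod hN,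
    gaussQuadrant_eq_integral_prod hB, gaussQuadrant_eq_integral_prod hS, ← integral_add hP hN,
    ← integral_const_mul, ← integral_const_mul, ← integral_sub (hB.const_mul _) (hS.const_mul _)]
  refine integral_congr_ae ?_
  rw [Measure.prod_restrict]
  filter_upwards [ae_restrict_mem (measurableSet_Ioi.prod measurableSet_Ioi)] with z hz
  simp only [← add_mul, weightPos_add_weightNeg hθ (mul_pos hz.1 hz.2).le]
  ring

theorem chi_two_formula (θ : ℝ) (hθ : θ ∈ Set.Ioo (-1 : ℝ) 1) :
    chi 2 θ = (2 / Real.sqrt (2 * Real.pi)) *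
      ((1 + θ ^ 2) / (1 - θ ^ 2) + Real.sqrt (2 * Real.pi) * chiPP 2 0 - θ ^ 2 * scrI θ) := by
  obtain ⟨hθ₁, hθ₂⟩ := hθ
  have hsum := gaussQuadrant_weightPos_add_weightNeg (θ := θ) (by nlinarith)
  have h₁ : 1 - θ ≠ 0 := by linarith
  have h₂ : 1 + θ ≠ 0 := by linarith
  have h₃ : 1 - θ ^ 2 ≠ 0 := by nlinarith
  rw [chi, chiPP_two hθ₁, chiMM_two hθ₂, chiPM_two hθ₂, chiMP_two hθ₁, chiPP_two neg_one_lt_zero]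
  field_simp
  linear_combination (1 - θ ^ 2) ^ 2 * hsum
end

section
/- For each integer m ≥ 1 there exists a constant c_{2m} ∈ (0,∞) such that for all θ ∈ (0,1): −c_{2m} ≤ (1−θ²)^{2m}·ξ_{2m}(θ) < 0, where ξ_{2m}(θ) = (2m)!·χ_{2m+1}(θ). Moreover there exist constants 0 < c_{m,1}, c_{m,2} such that −c_{m,1} ≤ (1−θ²)^{2m+1}·ξ_{2m+1}(θ) ≤ −c_{m,2} < 0 for all θ ∈ (−1,1), where ξ_{2m+1}(θ) = −(2m+1)!·χ_{2m+2}(θ). -/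
/-!
On each quadrant the integrand of `χ_{j+1}` collapses. On the diagonal quadrants
`e^{-(x-y)²/2} = e^{2xy} e^{-(x+y)²/2}` cancels one factor `±θ + e^{2xy}` of the denominator of `k`;
on the off-diagonal quadrants `k` is constant. Hence `√(2π) χ_{j+1}(θ)` is a combination, with
coefficients `1 ± θ` and `(1 ± θ)⁻ʲ`, of `J_j(±θ) = ∬_{x,y ≥ 0} (±θ + e^{2(xy)⁺})⁻ʲ e^{-(x+y)²/2}` and
`P = J_0 > 0`. After multiplying by `(1 - θ²)ʲ` only three facts about `J` are needed:
`0 ≤ (1 + θ)ʲ J_j(θ) ≤ P` and `J_j` is antitone in `θ`. For odd `j` every term is positive; for even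
`j` the `J`-terms differ by at most `2θ(1 - θ²)ʲ P`, which `((1 + θ)ʲ⁺¹ - (1 - θ)ʲ⁺¹) P` beats.
-/

open Real MeasureTheory Set

/-- `ξ_m(θ) = m!·(−1)^m·χ_{m+1}(θ)`. -/
noncomputable def xi (m : ℕ) (θ : ℝ) : ℝ :=
  (m.factorial : ℝ) * (-1) ^ m * chi (m + 1) θ

open scoped Nat

namespace SkewBrownian

noncomputable def ePos (x y : ℝ) : ℝ := exp (2 * max 0 (x * y))

noncomputable def gaussSum (x y : ℝ) : ℝ := exp (-(x + y) ^ 2 / 2)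

noncomputable def quadIntegral (w : ℝ → ℝ → ℝ) : ℝ :=
  ∫ x in Ici 0, ∫ y in Ici 0, w x y * gaussSum x y

noncomputable def J (j : ℕ) (θ : ℝ) : ℝ := quadIntegral fun x y => ((θ + ePos x y) ^ j)⁻¹

-- In fact `P = 1` (substitute `u = x + y`).
noncomputable def P : ℝ := quadIntegral fun _ _ => 1

lemma one_le_ePos (x y : ℝ) : 1 ≤ ePos x y :=
  one_le_exp (by positivity)

lemma gaussSum_pos (x y : ℝ) : 0 < gaussSum x y := exp_pos _

lemma gaussSum_le {x y : ℝ} (hx : 0 ≤ x) (hy : 0 ≤ y) :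
    gaussSum x y ≤ exp (-x ^ 2 / 2) * exp (-y ^ 2 / 2) := by
  rw [gaussSum, ← exp_add]
  exact exp_le_exp.2 (by nlinarith [mul_nonneg hx hy])

lemma integrable_exp_neg_sq_div_two : Integrable fun x : ℝ => exp (-x ^ 2 / 2) := by
  simpa [neg_div, div_eq_inv_mul] using integrable_exp_neg_mul_sq (b := 1 / 2) (by norm_num)

section quadIntegral

variable {w w₁ w₂ : ℝ → ℝ → ℝ} {B : ℝ}

lemma integrableOn_quadrant (hw : Measurable (Function.uncurry w)) (hB : ∀ x y, |w x y| ≤ B) :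
    IntegrableOn (fun z : ℝ × ℝ => w z.1 z.2 * gaussSum z.1 z.2) (Ici 0 ×ˢ Ici 0) := by
  have hdom : Integrable (fun z : ℝ × ℝ => B * (exp (-z.1 ^ 2 / 2) * exp (-z.2 ^ 2 / 2))) := by
    rw [Measure.volume_eq_prod]
    exact (integrable_exp_neg_sq_div_two.mul_prod integrable_exp_neg_sq_div_two).const_mul B
  refine hdom.integrableOn.mono' ?_ ((ae_restrict_iff' (measurableSet_Ici.prod measurableSet_Ici)).2
    (.of_forall fun z hz => ?_))
  · exact (hw.mul (by unfold gaussSum; fun_prop)).aestronglyMeasurable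
  · rw [norm_mul, Real.norm_of_nonneg (gaussSum_pos _ _).le]
    exact mul_le_mul (hB _ _) (gaussSum_le hz.1 hz.2) (gaussSum_pos _ _).le
      ((abs_nonneg _).trans (hB 0 0))

lemma quadIntegral_eq_setIntegral
    (hw : IntegrableOn (fun z : ℝ × ℝ => w z.1 z.2 * gaussSum z.1 z.2) (Ici 0 ×ˢ Ici 0)) :
    quadIntegral w = ∫ z in Ici 0 ×ˢ Ici 0, w z.1 z.2 * gaussSum z.1 z.2 := by
  rw [Measure.volume_eq_prod] at hw ⊢
  exact (setIntegral_prod _ hw).symm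

lemma quadIntegral_mono
    (hw₁ : IntegrableOn (fun z : ℝ × ℝ => w₁ z.1 z.2 * gaussSum z.1 z.2) (Ici 0 ×ˢ Ici 0))
    (hw₂ : IntegrableOn (fun z : ℝ × ℝ => w₂ z.1 z.2 * gaussSum z.1 z.2) (Ici 0 ×ˢ Ici 0))
    (h : ∀ x y, 0 ≤ x → 0 ≤ y → w₁ x y ≤ w₂ x y) :
    quadIntegral w₁ ≤ quadIntegral w₂ := by
  rw [quadIntegral_eq_setIntegral hw₁, quadIntegral_eq_setIntegral hw₂]
  exact setIntegral_mono_on hw₁ hw₂ (measurableSet_Ici.prod measurableSet_Ici) fun z hz =>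
    mul_le_mul_of_nonneg_right (h _ _ hz.1 hz.2) (gaussSum_pos _ _).le

lemma quadIntegral_nonneg (h : ∀ x y, 0 ≤ x → 0 ≤ y → 0 ≤ w x y) : 0 ≤ quadIntegral w :=
  setIntegral_nonneg measurableSet_Ici fun x hx => setIntegral_nonneg measurableSet_Ici
    fun y hy => mul_nonneg (h x y hx hy) (gaussSum_pos x y).le

lemma quadIntegral_const (c : ℝ) : quadIntegral (fun _ _ => c) = c * P := by
  simp only [quadIntegral, P, one_mul, ← integral_const_mul]

end quadIntegral

lemma P_pos : 0 < P := by
  have hP : IntegrableOn (fun z : ℝ × ℝ => 1 * gaussSum z.1 z.2) (Ici 0 ×ˢ Ici 0) :=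
    integrableOn_quadrant (w := fun _ _ => 1) (B := 1) measurable_const fun _ _ => by simp
  have : NeZero (volume.restrict (Ici (0 : ℝ) ×ˢ Ici (0 : ℝ))) := by
    refine ⟨fun h => ?_⟩
    rw [Measure.restrict_eq_zero, Measure.volume_eq_prod, Measure.prod_prod, Real.volume_Ici] at h
    simp at h
  rw [P, quadIntegral_eq_setIntegral hP]
  simp only [one_mul, gaussSum] at hP ⊢
  exact integral_exp_pos hP

section J

variable (j : ℕ) {θ : ℝ}

lemma inv_pow_add_ePos_le (hθ : -1 < θ) (x y : ℝ) :
    ((θ + ePos x y) ^ j)⁻¹ ≤ ((1 + θ) ^ j)⁻¹ :=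
  inv_anti₀ (pow_pos (by linarith) j)
    (pow_le_pow_left₀ (by linarith) (by linarith [one_le_ePos x y]) j)

lemma integrableOn_J (hθ : -1 < θ) :
    IntegrableOn (fun z : ℝ × ℝ => ((θ + ePos z.1 z.2) ^ j)⁻¹ * gaussSum z.1 z.2)
      (Ici 0 ×ˢ Ici 0) := by
  refine integrableOn_quadrant (w := fun x y => ((θ + ePos x y) ^ j)⁻¹) (B := ((1 + θ) ^ j)⁻¹)
    (by unfold ePos; fun_prop) fun x y => ?_
  rw [abs_of_nonneg (inv_nonneg.2 (pow_nonneg (by linarith [one_le_ePos x y]) j))]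
  exact inv_pow_add_ePos_le j hθ x y

lemma J_nonneg (hθ : -1 < θ) : 0 ≤ J j θ :=
  quadIntegral_nonneg fun x y _ _ => inv_nonneg.2 (pow_nonneg (by linarith [one_le_ePos x y]) j)

lemma J_antitoneOn : AntitoneOn (J j) (Ioi (-1)) := fun θ (hθ : -1 < θ) θ' (hθ' : -1 < θ') hθθ' =>
  quadIntegral_mono (integrableOn_J j hθ') (integrableOn_J j hθ) fun x y _ _ =>
    inv_anti₀ (pow_pos (by linarith [one_le_ePos x y]) j)
      (pow_le_pow_left₀ (by linarith [one_le_ePos x y]) (by linarith) j)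

lemma pow_mul_J_le_P (hθ : -1 < θ) : (1 + θ) ^ j * J j θ ≤ P := by
  have hpos : 0 < (1 + θ) ^ j := pow_pos (by linarith) j
  rw [← le_div_iff₀' hpos, div_eq_inv_mul, ← quadIntegral_const]
  exact quadIntegral_mono (integrableOn_J j hθ)
    (integrableOn_quadrant (B := ((1 + θ) ^ j)⁻¹) measurable_const fun _ _ =>
      (abs_of_pos (inv_pos.2 hpos)).le)
    fun x y _ _ => inv_pow_add_ePos_le j hθ x y

end J

lemma exp_neg_sub_sq_div_two {x y : ℝ} (hxy : 0 ≤ x * y) :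
    exp (-(x - y) ^ 2 / 2) = ePos x y * gaussSum x y := by
  rw [ePos, gaussSum, ← exp_add, max_eq_right hxy]
  ring_nf

section integrand

variable (j : ℕ) {θ x y : ℝ}

lemma integrand_pos_pos (hθ : -1 < θ) (hx : 0 ≤ x) (hy : 0 < y) :
    k θ x y ^ (j + 1) * p θ x y * μinv θ x
      = (1 + θ) * (√(2 * π))⁻¹ * (((θ + ePos x y) ^ j)⁻¹ * gaussSum x y) := by
  have hE : θ + ePos x y ≠ 0 := by linarith [one_le_ePos x y]
  rw [k, p, μinv, sign_of_pos hy, if_pos ⟨hx, hy.le⟩, if_pos hx,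
    exp_neg_sub_sq_div_two (mul_nonneg hx hy.le)]
  change (1 / (1 * θ + ePos x y)) ^ (j + 1) * _ * _ = _
  rw [show exp (-(x + y) ^ 2 / 2) = gaussSum x y from rfl, one_mul, div_pow, pow_succ]
  field_simp
  ring

lemma integrand_neg_neg (hθ : θ < 1) (hx : x < 0) (hy : y < 0) :
    k θ x y ^ (j + 1) * p θ x y * μinv θ x
      = (-1) ^ (j + 1) * (1 - θ) * (√(2 * π))⁻¹ * (((-θ + ePos x y) ^ j)⁻¹ * gaussSum x y) := by
  have hE : -θ + ePos x y ≠ 0 := by linarith [one_le_ePos x y]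
  rw [k, p, μinv, sign_of_neg hy, if_neg fun h => hy.not_ge h.2, if_pos ⟨hx.le, hy.le⟩,
    if_neg hx.not_ge, exp_neg_sub_sq_div_two (mul_pos_of_neg_of_neg hx hy).le]
  change (-1 / (-1 * θ + ePos x y)) ^ (j + 1) * _ * _ = _
  rw [show exp (-(x + y) ^ 2 / 2) = gaussSum x y from rfl, neg_one_mul, div_pow,
    pow_succ (_ + _)]
  field_simp
  ring

lemma integrand_pos_neg (hθ : θ < 1) (hx : 0 < x) (hy : y < 0) :
    k θ x y ^ (j + 1) * p θ x y * μinv θ x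
      = (-1) ^ (j + 1) * (1 + θ) * ((1 - θ) ^ j)⁻¹ * (√(2 * π))⁻¹ * exp (-(x - y) ^ 2 / 2) := by
  have hθ' : 1 - θ ≠ 0 := by linarith
  rw [k, p, μinv, sign_of_neg hy, max_eq_left (mul_neg_of_pos_of_neg hx hy).le, mul_zero,
    exp_zero, if_neg fun h => hy.not_ge h.2, if_neg fun h => hx.not_ge h.1, if_pos hx.le,
    if_pos hx.le, show -1 * θ + 1 = 1 - θ by ring, div_pow, pow_succ (1 - θ)]
  field_simp

lemma integrand_neg_pos (hθ : -1 < θ) (hx : x < 0) (hy : 0 < y) :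
    k θ x y ^ (j + 1) * p θ x y * μinv θ x
      = (1 - θ) * ((1 + θ) ^ j)⁻¹ * (√(2 * π))⁻¹ * exp (-(x - y) ^ 2 / 2) := by
  have hθ' : 1 + θ ≠ 0 := by linarith
  rw [k, p, μinv, sign_of_pos hy, max_eq_left (mul_neg_of_neg_of_pos hx hy).le, mul_zero,
    exp_zero, if_neg fun h => hx.not_ge h.1, if_neg fun h => hy.not_ge h.2, if_neg hx.not_ge,
    if_neg hx.not_ge, show 1 * θ + 1 = 1 + θ by ring, div_pow, pow_succ (1 + θ)]
  field_simp
  ring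

end integrand

lemma ePos_neg_neg (x y : ℝ) : ePos (-x) (-y) = ePos x y := by
  rw [ePos, ePos, neg_mul_neg]

lemma gaussSum_neg_neg (x y : ℝ) : gaussSum (-x) (-y) = gaussSum x y := by
  rw [gaussSum, gaussSum, ← neg_add, neg_sq]

lemma integral_Iic_zero_eq_integral_Ici_neg (f : ℝ → ℝ) :
    ∫ x in Iic 0, f x = ∫ x in Ici 0, f (-x) := by
  rw [integral_Ici_eq_integral_Ioi, integral_comp_neg_Ioi, neg_zero]

lemma P_eq_integral_exp_neg_sub_sq :
    P = ∫ x in Ici 0, ∫ y in Iic 0, exp (-(x - y) ^ 2 / 2) := by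
  simp only [P, quadIntegral, one_mul, integral_Iic_zero_eq_integral_Ici_neg, sub_neg_eq_add,
    gaussSum]

section quadrants

variable (j : ℕ) {θ : ℝ}

lemma chiPP_succ (hθ : -1 < θ) : chiPP (j + 1) θ = (1 + θ) * (√(2 * π))⁻¹ * J j θ := by
  rw [chiPP, J, quadIntegral, ← integral_const_mul]
  refine setIntegral_congr_fun measurableSet_Ici fun x hx => ?_
  rw [← integral_const_mul, integral_Ici_eq_integral_Ioi, integral_Ici_eq_integral_Ioi]
  exact setIntegral_congr_fun measurableSet_Ioi fun y hy => integrand_pos_pos j hθ hx hy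

lemma chiMM_succ (hθ : θ < 1) :
    chiMM (j + 1) θ = (-1) ^ (j + 1) * (1 - θ) * (√(2 * π))⁻¹ * J j (-θ) := by
  have hinner : EqOn (fun x => ∫ y in Iic 0, k θ x y ^ (j + 1) * p θ x y * μinv θ x)
      (fun x => (-1) ^ (j + 1) * (1 - θ) * (√(2 * π))⁻¹ *
        ∫ y in Iic 0, ((-θ + ePos x y) ^ j)⁻¹ * gaussSum x y) (Iio 0) := fun x hx => by
    dsimp only
    rw [← integral_const_mul, integral_Iic_eq_integral_Iio, integral_Iic_eq_integral_Iio]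
    exact setIntegral_congr_fun measurableSet_Iio fun y hy => integrand_neg_neg j hθ hx hy
  rw [chiMM, integral_Iic_eq_integral_Iio, setIntegral_congr_fun measurableSet_Iio hinner,
    integral_const_mul, ← integral_Iic_eq_integral_Iio]
  simp only [integral_Iic_zero_eq_integral_Ici_neg, ePos_neg_neg, gaussSum_neg_neg, J,
    quadIntegral]

lemma chiPM_succ (hθ : θ < 1) :
    chiPM (j + 1) θ = (-1) ^ (j + 1) * (1 + θ) * ((1 - θ) ^ j)⁻¹ * (√(2 * π))⁻¹ * P := by
  have hinner : EqOn (fun x => ∫ y in Iic 0, k θ x y ^ (j + 1) * p θ x y * μinv θ x)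
      (fun x => (-1) ^ (j + 1) * (1 + θ) * ((1 - θ) ^ j)⁻¹ * (√(2 * π))⁻¹ *
        ∫ y in Iic 0, exp (-(x - y) ^ 2 / 2)) (Ioi 0) := fun x hx => by
    dsimp only
    rw [← integral_const_mul, integral_Iic_eq_integral_Iio, integral_Iic_eq_integral_Iio]
    exact setIntegral_congr_fun measurableSet_Iio fun y hy => integrand_pos_neg j hθ hx hy
  rw [chiPM, integral_Ici_eq_integral_Ioi, setIntegral_congr_fun measurableSet_Ioi hinner,
    integral_const_mul, ← integral_Ici_eq_integral_Ioi, P_eq_integral_exp_neg_sub_sq]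

lemma chiMP_succ (hθ : -1 < θ) :
    chiMP (j + 1) θ = (1 - θ) * ((1 + θ) ^ j)⁻¹ * (√(2 * π))⁻¹ * P := by
  have hinner : EqOn (fun x => ∫ y in Ici 0, k θ x y ^ (j + 1) * p θ x y * μinv θ x)
      (fun x => (1 - θ) * ((1 + θ) ^ j)⁻¹ * (√(2 * π))⁻¹ *
        ∫ y in Ici 0, exp (-(x - y) ^ 2 / 2)) (Iio 0) := fun x hx => by
    dsimp only
    rw [← integral_const_mul, integral_Ici_eq_integral_Ioi, integral_Ici_eq_integral_Ioi]
    exact setIntegral_congr_fun measurableSet_Ioi fun y hy => integrand_neg_pos j hθ hx hy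
  rw [chiMP, integral_Iic_eq_integral_Iio, setIntegral_congr_fun measurableSet_Iio hinner,
    integral_const_mul, ← integral_Iic_eq_integral_Iio]
  simp only [P, quadIntegral, one_mul, integral_Iic_zero_eq_integral_Ici_neg, gaussSum,
    neg_sub_left, neg_sq, add_comm]

end quadrants

lemma sqrt_two_pi_mul_chi_succ (j : ℕ) {θ : ℝ} (hθ : θ ∈ Ioo (-1) 1) :
    √(2 * π) * ((1 - θ ^ 2) ^ j * chi (j + 1) θ)
      = (1 - θ ^ 2) ^ j * ((1 + θ) * J j θ + (-1) ^ (j + 1) * ((1 - θ) * J j (-θ)))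
        + ((-1) ^ (j + 1) * (1 + θ) ^ (j + 1) + (1 - θ) ^ (j + 1)) * P := by
  have h₁ : 1 + θ ≠ 0 := by linarith [hθ.1]
  have h₂ : 1 - θ ≠ 0 := by linarith [hθ.2]
  have hπ : √(2 * π) ≠ 0 := by positivity
  rw [chi, chiPP_succ j hθ.1, chiMM_succ j hθ.2, chiPM_succ j hθ.2, chiMP_succ j hθ.1,
    show 1 - θ ^ 2 = (1 + θ) * (1 - θ) by ring, mul_pow]
  field_simp
  ring

lemma one_sub_sq_pow_mul_J_le (j : ℕ) {θ : ℝ} (hθ : θ ∈ Ioo (-1) 1) :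
    (1 - θ ^ 2) ^ j * ((1 + θ) * J j θ) ≤ (1 - θ) ^ j * (1 + θ) * P := by
  have h₁ : 0 ≤ 1 + θ := by linarith [hθ.1]
  have h₂ : 0 ≤ 1 - θ := by linarith [hθ.2]
  calc (1 - θ ^ 2) ^ j * ((1 + θ) * J j θ) = (1 - θ) ^ j * (1 + θ) * ((1 + θ) ^ j * J j θ) := by
        rw [show 1 - θ ^ 2 = (1 - θ) * (1 + θ) by ring, mul_pow]; ring
    _ ≤ (1 - θ) ^ j * (1 + θ) * P :=
        mul_le_mul_of_nonneg_left (pow_mul_J_le_P j hθ.1) (by positivity)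

lemma one_sub_sq_pow_mul_J_neg_le (j : ℕ) {θ : ℝ} (hθ : θ ∈ Ioo (-1) 1) :
    (1 - θ ^ 2) ^ j * ((1 - θ) * J j (-θ)) ≤ (1 + θ) ^ j * (1 - θ) * P := by
  have := one_sub_sq_pow_mul_J_le j (θ := -θ) ⟨by linarith [hθ.2], by linarith [hθ.1]⟩
  rwa [neg_sq, ← sub_eq_add_neg, sub_neg_eq_add] at this

lemma two_mul_mul_one_sub_sq_pow_lt {j : ℕ} (hj : j ≠ 0) {θ : ℝ} (hθ : θ ∈ Ioo 0 1) :
    2 * θ * (1 - θ ^ 2) ^ j < (1 + θ) ^ (j + 1) - (1 - θ) ^ (j + 1) := by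
  have h₁ : (1 - θ) ^ j < 1 := pow_lt_one₀ (by linarith [hθ.2]) (by linarith [hθ.1]) hj
  have h₂ : 1 < (1 + θ) ^ j := one_lt_pow₀ (by linarith [hθ.1]) hj
  have h₃ : 0 < (1 - θ) ^ j := pow_pos (by linarith [hθ.2]) j
  have h₄ : 0 < 1 - θ := by linarith [hθ.2]
  have h₅ : 0 < (1 + θ) ^ j * (1 + θ) := by nlinarith [hθ.1]
  rw [show 1 - θ ^ 2 = (1 + θ) * (1 - θ) by ring, mul_pow, pow_succ, pow_succ (1 - θ)]
  nlinarith [mul_pos h₅ (sub_pos.2 h₁), mul_pos (mul_pos h₃ h₄) (sub_pos.2 h₂)]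

lemma one_le_one_add_pow_add_one_sub_pow (n : ℕ) {θ : ℝ} (hθ : θ ∈ Icc (-1) 1) :
    1 ≤ (1 + θ) ^ n + (1 - θ) ^ n := by
  have h₁ : 0 ≤ 1 + θ := by linarith [hθ.1]
  have h₂ : 0 ≤ 1 - θ := by linarith [hθ.2]
  rcases le_total 0 θ with h | h
  · linarith [one_le_pow₀ (n := n) (show 1 ≤ 1 + θ by linarith), pow_nonneg h₂ n]
  · linarith [one_le_pow₀ (n := n) (show 1 ≤ 1 - θ by linarith), pow_nonneg h₁ n]

section bounds

variable {j : ℕ} {θ : ℝ}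

lemma chi_succ_lower_bound_of_even (hj : Even j) (hθ : θ ∈ Ioo (-1) 1) :
    -(2 ^ (j + 1) * P) ≤ √(2 * π) * ((1 - θ ^ 2) ^ j * chi (j + 1) θ) := by
  have h₁ : 0 ≤ 1 + θ := by linarith [hθ.1]
  have h₂ : 0 ≤ 1 - θ := by linarith [hθ.2]
  have hJ : 0 ≤ (1 - θ ^ 2) ^ j * ((1 + θ) * J j θ) :=
    mul_nonneg (pow_nonneg (by nlinarith) j) (mul_nonneg h₁ (J_nonneg j hθ.1))
  have h2j : (1 + θ) ^ j * P ≤ 2 ^ j * P :=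
    mul_le_mul_of_nonneg_right (pow_le_pow_left₀ h₁ (by linarith) j) P_pos.le
  have hP : 0 ≤ (1 - θ) ^ (j + 1) * P := mul_nonneg (pow_nonneg h₂ _) P_pos.le
  rw [sqrt_two_pi_mul_chi_succ j hθ, hj.add_one.neg_one_pow, pow_succ (1 + θ), pow_succ 2]
  linarith [one_sub_sq_pow_mul_J_neg_le j hθ]

lemma chi_succ_neg_of_even (hj : Even j) (hj₀ : j ≠ 0) (hθ : θ ∈ Ioo 0 1) :
    √(2 * π) * ((1 - θ ^ 2) ^ j * chi (j + 1) θ) < 0 := by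
  have hθ' : θ ∈ Ioo (-1) 1 := ⟨by linarith [hθ.1], hθ.2⟩
  have hJ : (1 + θ) * J j θ - (1 - θ) * J j (-θ) ≤ 2 * θ * P := by
    have hJ₀ : J j 0 ≤ P := by simpa using pow_mul_J_le_P j (θ := 0) (by norm_num)
    calc (1 + θ) * J j θ - (1 - θ) * J j (-θ) ≤ (1 + θ) * J j 0 - (1 - θ) * J j 0 := by
          gcongr
          · linarith [hθ.1]
          · exact J_antitoneOn j (show (-1 : ℝ) < 0 by norm_num) hθ'.1 hθ.1.le
          · linarith [hθ.2]
          · exact J_antitoneOn j (show -1 < -θ by linarith [hθ.2]) (show (-1 : ℝ) < 0 by norm_num)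
              (by linarith [hθ.1])
      _ = 2 * θ * J j 0 := by ring
      _ ≤ 2 * θ * P := by gcongr; linarith [hθ.1]
  have hq : 0 < (1 - θ ^ 2) ^ j := pow_pos (by nlinarith [hθ.1, hθ.2]) j
  rw [sqrt_two_pi_mul_chi_succ j hθ', hj.add_one.neg_one_pow]
  nlinarith [mul_le_mul_of_nonneg_left hJ hq.le,
    mul_lt_mul_of_pos_right (two_mul_mul_one_sub_sq_pow_lt hj₀ hθ) P_pos]

lemma chi_succ_bounds_of_odd (hj : Odd j) (hθ : θ ∈ Ioo (-1) 1) :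
    P ≤ √(2 * π) * ((1 - θ ^ 2) ^ j * chi (j + 1) θ) ∧
      √(2 * π) * ((1 - θ ^ 2) ^ j * chi (j + 1) θ) ≤ 2 ^ (j + 2) * P := by
  have h₁ : 0 ≤ 1 + θ := by linarith [hθ.1]
  have h₂ : 0 ≤ 1 - θ := by linarith [hθ.2]
  have hJ : 0 ≤ (1 - θ ^ 2) ^ j * ((1 + θ) * J j θ + (1 - θ) * J j (-θ)) :=
    mul_nonneg (pow_nonneg (by nlinarith) j) (add_nonneg (mul_nonneg h₁ (J_nonneg j hθ.1))
      (mul_nonneg h₂ (J_nonneg j (by linarith [hθ.2]))))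
  rw [sqrt_two_pi_mul_chi_succ j hθ, hj.add_one.neg_one_pow, one_mul, one_mul]
  constructor
  · nlinarith [mul_le_mul_of_nonneg_right
      (one_le_one_add_pow_add_one_sub_pow (j + 1) (Ioo_subset_Icc_self hθ)) P_pos.le]
  · have h2j₁ : (1 + θ) ^ j * P ≤ 2 ^ j * P :=
      mul_le_mul_of_nonneg_right (pow_le_pow_left₀ h₁ (by linarith) j) P_pos.le
    have h2j₂ : (1 - θ) ^ j * P ≤ 2 ^ j * P :=
      mul_le_mul_of_nonneg_right (pow_le_pow_left₀ h₂ (by linarith [hθ.1]) j) P_pos.le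
    rw [pow_succ (1 + θ), pow_succ (1 - θ), pow_add 2 j 2]
    linarith [one_sub_sq_pow_mul_J_le j hθ, one_sub_sq_pow_mul_J_neg_le j hθ]

end bounds

lemma one_sub_sq_pow_mul_xi (j : ℕ) (θ : ℝ) :
    (1 - θ ^ 2) ^ j * xi j θ
      = j ! * (-1) ^ j / √(2 * π) * (√(2 * π) * ((1 - θ ^ 2) ^ j * chi (j + 1) θ)) := by
  have hπ : √(2 * π) ≠ 0 := by positivity
  rw [xi]
  field_simp

section xi

variable {j : ℕ} {θ : ℝ}

lemma xi_bounds_of_even (hj : Even j) (hj₀ : j ≠ 0) (hθ : θ ∈ Ioo 0 1) :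
    -(j ! * 2 ^ (j + 1) * P / √(2 * π)) ≤ (1 - θ ^ 2) ^ j * xi j θ ∧
      (1 - θ ^ 2) ^ j * xi j θ < 0 := by
  have hc : 0 < (j ! : ℝ) / √(2 * π) := by positivity
  rw [one_sub_sq_pow_mul_xi, hj.neg_one_pow, mul_one]
  refine ⟨?_, mul_neg_of_pos_of_neg hc (chi_succ_neg_of_even hj hj₀ hθ)⟩
  calc -(j ! * 2 ^ (j + 1) * P / √(2 * π)) = j ! / √(2 * π) * -(2 ^ (j + 1) * P) := by ring
    _ ≤ _ := mul_le_mul_of_nonneg_left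
        (chi_succ_lower_bound_of_even hj ⟨by linarith [hθ.1], hθ.2⟩) hc.le

lemma xi_bounds_of_odd (hj : Odd j) (hθ : θ ∈ Ioo (-1) 1) :
    -(j ! * 2 ^ (j + 2) * P / √(2 * π)) ≤ (1 - θ ^ 2) ^ j * xi j θ ∧
      (1 - θ ^ 2) ^ j * xi j θ ≤ -(j ! * P / √(2 * π)) := by
  have hc : 0 ≤ (j ! : ℝ) / √(2 * π) := by positivity
  obtain ⟨hlo, hhi⟩ := chi_succ_bounds_of_odd hj hθ
  rw [one_sub_sq_pow_mul_xi, hj.neg_one_pow, mul_neg_one, neg_div, neg_mul]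
  simp only [neg_le_neg_iff]
  exact ⟨(mul_le_mul_of_nonneg_left hhi hc).trans_eq (by ring),
    (mul_le_mul_of_nonneg_left hlo hc).trans_eq' (by ring)⟩

end xi

end SkewBrownian

theorem xi_bounds (m : ℕ) (hm : 1 ≤ m) :
    (∃ c : ℝ, 0 < c ∧ ∀ θ ∈ Set.Ioo (0 : ℝ) 1,
        -c ≤ (1 - θ ^ 2) ^ (2 * m) * xi (2 * m) θ ∧
        (1 - θ ^ 2) ^ (2 * m) * xi (2 * m) θ < 0) ∧
    (∃ c₁ c₂ : ℝ, 0 < c₁ ∧ 0 < c₂ ∧ ∀ θ ∈ Set.Ioo (-1 : ℝ) 1,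
        -c₁ ≤ (1 - θ ^ 2) ^ (2 * m + 1) * xi (2 * m + 1) θ ∧
        (1 - θ ^ 2) ^ (2 * m + 1) * xi (2 * m + 1) θ ≤ -c₂) := by
  have hP := SkewBrownian.P_pos
  exact ⟨⟨_, by positivity, fun θ hθ =>
      SkewBrownian.xi_bounds_of_even (even_two_mul m) (by omega) hθ⟩,
    ⟨_, _, by positivity, by positivity, fun θ hθ =>
      SkewBrownian.xi_bounds_of_odd (odd_two_mul_add_one m) hθ⟩⟩
end

section
/- For every a > 0, every θ ∈ (−1,1), every integer m ≥ 1, and all real x, y: |k_θ(x,y)|^m ≤ (1−|θ|)^{−m}·(exp(−2x²) + exp(−a|x|))·exp(a|y−x|). Consequently, the dominating function h(x) = (1−|θ|)^{−m}(e^{−2x²}+e^{−a|x|}) satisfies ∫_ℝ h(x)|x|^γ dx < ∞ for every γ > 0. -/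
open Real MeasureTheory

open Set

/-!
Since `exp (2 (xy)⁺) ≥ 1`, the denominator of `k θ` is at least `(1 - |θ|) exp (2 (xy)⁺)`, so
`|k θ x y|^m ≤ (1 - |θ|)^{-m} exp (-2 (xy)⁺)`. The exponent is compared with
`max (-2x², -a|x|) + a|y - x|`: if `xy ≤ 0` then `|x| ≤ |y - x|`; if `xy > 0` and `|y| ≥ |x|`
then `xy ≥ x²`; if `xy > 0` and `|y| < |x|` then `|y - x| ≥ |x| - |y|`, and the Gaussian or the
exponential term wins according as `2|x| ≤ a` or not. Integrability of the dominating function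
against `|x|^γ` reduces, by evenness, to the Gamma-type integrals on `(0, ∞)`.
-/

lemma abs_k_le (θ x y : ℝ) (hθ : |θ| < 1) :
    |k θ x y| ≤ (1 - |θ|)⁻¹ * exp (-(2 * max 0 (x * y))) := by
  rcases eq_or_ne y 0 with rfl | hy
  · simpa [k] using hθ.le
  set E := exp (2 * max 0 (x * y))
  have hE : 1 ≤ E := one_le_exp (by positivity)
  have hsign : |Real.sign y| = 1 := by
    rcases hy.lt_or_gt with h | h <;> simp [Real.sign_of_neg, Real.sign_of_pos, h]
  have hden : (1 - |θ|) * E ≤ |Real.sign y * θ + E| := by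
    have := abs_sub_abs_le_abs_sub E (-(Real.sign y * θ))
    rw [abs_neg, abs_mul, hsign, one_mul, abs_of_pos (exp_pos _), sub_neg_eq_add,
      add_comm] at this
    nlinarith [abs_nonneg θ]
  rw [k, abs_div, hsign, exp_neg, ← mul_inv, one_div]
  exact inv_anti₀ (mul_pos (by linarith) (exp_pos _)) hden

lemma neg_two_posPart_mul_le {a : ℝ} (ha : 0 ≤ a) (x y : ℝ) :
    -(2 * max 0 (x * y)) ≤ max (-2 * x ^ 2) (-a * |x|) + a * |y - x| := by
  rcases le_or_gt (x * y) 0 with hxy | hxy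
  · have : |x| ≤ |y - x| := sq_le_sq.1 (by nlinarith)
    rw [max_eq_left hxy]
    nlinarith [le_max_right (-2 * x ^ 2) (-a * |x|)]
  have hxy' : x * y = |x| * |y| := by rw [← abs_mul, abs_of_pos hxy]
  have hdist : |x| - |y| ≤ |y - x| := abs_sub_comm x y ▸ abs_sub_abs_le_abs_sub x y
  rw [max_eq_right hxy.le, hxy']
  have hgauss := le_max_left (-2 * x ^ 2) (-a * |x|)
  have hexp := le_max_right (-2 * x ^ 2) (-a * |x|)
  rcases le_or_gt |x| |y| with hle | hlt
  · nlinarith [abs_nonneg x, sq_abs x, abs_nonneg (y - x)]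
  rcases le_or_gt (2 * |x|) a with hsmall | hlarge
  · nlinarith [sq_abs x]
  · nlinarith [abs_nonneg y]

lemma exp_neg_two_posPart_mul_le {a : ℝ} (ha : 0 ≤ a) (x y : ℝ) :
    exp (-(2 * max 0 (x * y))) ≤
      (exp (-2 * x ^ 2) + exp (-a * |x|)) * exp (a * |y - x|) := by
  calc exp (-(2 * max 0 (x * y)))
      ≤ exp (max (-2 * x ^ 2) (-a * |x|)) * exp (a * |y - x|) := by
        rw [← exp_add]
        exact exp_le_exp.2 (neg_two_posPart_mul_le ha x y)
    _ ≤ (exp (-2 * x ^ 2) + exp (-a * |x|)) * exp (a * |y - x|) := by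
        rw [exp_monotone.map_max]
        gcongr
        exact max_le_add_of_nonneg (exp_pos _).le (exp_pos _).le

lemma integrable_comp_abs_of_integrableOn_Ioi {E : Type*} [NormedAddCommGroup E] {f : ℝ → E}
    (hf : IntegrableOn f (Ioi 0)) : Integrable fun x => f |x| := by
  have hIoi : IntegrableOn (fun x => f |x|) (Ioi 0) :=
    hf.congr_fun (fun x hx => by rw [abs_of_pos (mem_Ioi.1 hx)]) measurableSet_Ioi
  rw [← integrableOn_univ, ← Iic_union_Ioi (a := (0 : ℝ)), integrableOn_union]
  refine ⟨?_, hIoi⟩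
  have hneg : MeasurableEmbedding fun x : ℝ => -x := (Homeomorph.neg ℝ).measurableEmbedding
  rw [← Measure.map_neg_eq_self (volume : Measure ℝ), hneg.integrableOn_map_iff]
  simp only [Function.comp_def, abs_neg, neg_preimage, neg_Iic, neg_zero]
  exact (integrableOn_Ici_iff_integrableOn_Ioi).mpr hIoi

lemma abs_k_pow_le {a θ : ℝ} (ha : 0 ≤ a) (hθ : |θ| < 1) {m : ℕ} (hm : m ≠ 0) (x y : ℝ) :
    |k θ x y| ^ m ≤
      ((1 - |θ|) ^ m)⁻¹ * (exp (-2 * x ^ 2) + exp (-a * |x|)) * exp (a * |y - x|) := by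
  have hθ_pos : 0 < 1 - |θ| := by linarith
  have hexp_le_one : exp (-(2 * max 0 (x * y))) ≤ 1 :=
    exp_le_one_iff.2 (by linarith [le_max_left 0 (x * y)])
  calc |k θ x y| ^ m ≤ ((1 - |θ|)⁻¹ * exp (-(2 * max 0 (x * y)))) ^ m :=
        pow_le_pow_left₀ (abs_nonneg _) (abs_k_le θ x y hθ) m
    _ ≤ ((1 - |θ|) ^ m)⁻¹ * exp (-(2 * max 0 (x * y))) := by
        rw [mul_pow, inv_pow]
        gcongr
        exact pow_le_of_le_one (exp_pos _).le hexp_le_one hm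
    _ ≤ ((1 - |θ|) ^ m)⁻¹ * (exp (-2 * x ^ 2) + exp (-a * |x|)) * exp (a * |y - x|) := by
        rw [mul_assoc]
        gcongr
        exact exp_neg_two_posPart_mul_le ha x y

lemma integrable_exp_add_exp_mul_abs_rpow {a γ : ℝ} (ha : 0 < a) (hγ : -1 < γ) :
    Integrable fun x : ℝ => (exp (-2 * x ^ 2) + exp (-a * |x|)) * |x| ^ γ := by
  have hIoi : IntegrableOn (fun t => (exp (-2 * t ^ 2) + exp (-a * t)) * t ^ γ) (Ioi 0) := by
    refine ((integrableOn_rpow_mul_exp_neg_mul_sq two_pos hγ).add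
      (integrableOn_rpow_mul_exp_neg_mul_rpow hγ one_pos ha)).congr_fun (fun t _ => ?_)
      measurableSet_Ioi
    simp only [Pi.add_apply, rpow_one]
    ring
  simpa only [sq_abs] using integrable_comp_abs_of_integrableOn_Ioi hIoi

theorem k_domination (a : ℝ) (ha : 0 < a) (θ : ℝ) (hθ : θ ∈ Set.Ioo (-1 : ℝ) 1)
    (m : ℕ) (hm : 1 ≤ m) :
    (∀ x y : ℝ,
      |k θ x y| ^ m ≤ ((1 - |θ|) ^ m)⁻¹ *
        (Real.exp (-2 * x ^ 2) + Real.exp (-a * |x|)) * Real.exp (a * |y - x|)) ∧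
    (∀ γ : ℝ, 0 < γ →
      MeasureTheory.Integrable (fun x : ℝ =>
        ((1 - |θ|) ^ m)⁻¹ * (Real.exp (-2 * x ^ 2) + Real.exp (-a * |x|)) * |x| ^ γ)) := by
  refine ⟨abs_k_pow_le ha.le (abs_lt.2 hθ) (by omega), fun γ hγ => ?_⟩
  simpa only [mul_assoc] using
    (integrable_exp_add_exp_mul_abs_rpow ha (by linarith : (-1 : ℝ) < γ)).const_mul
      ((1 - |θ|) ^ m)⁻¹
end
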